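/- arXiv:math/0009030 — 6 statements merged into one kernel-verified Lean document; each statement's English description precedes it below -/
import Mathlib

section
/- Let E be a finite-dimensional complex normed space, let f : E → E be analytic at 0 with f 0 = 0, let A := fderiv ℂ f 0, and let F denote the formal multilinear (Taylor) series of f at 0. Suppose f is holomorphically linearizable, i.e. there exists h₀ : E → E analytic at 0 with h₀ 0 = 0, fderiv ℂ h₀ 0 = id, and h₀ ∘ f = A ∘ h₀ on a neighborhood of 0. Then for every formal linearization of f — every formal multilinear series p : FormalMultilinearSeries ℂ E E with p 0 = 0, p 1 equal to the identity, and p.comp F = A ∘ p (where (A ∘ p)ₙ = A ∘ pₙ) — and for every m ∈ ℕ, there exists h : E → E analytic at 0 with h 0 = 0, fderiv ℂ h 0 = id, h ∘ f = A ∘ h on a neighborhood of 0, and whose Taylor series P at 0 satisfies P n = p n for all n ≤ m. In other words, the m-jets of formal linearizations of f coincide with the m-jets of convergent linearizations. -/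
open Filter Topology


namespace JetsAux

open FormalMultilinearSeries

variable {E : Type*} [NormedAddCommGroup E] [NormedSpace ℂ E]

/-- Linear postcomposition commutes with formal composition. -/
theorem clm_comp_comp (A : E →L[ℂ] E) (r s : FormalMultilinearSeries ℂ E E) :
    (A.compFormalMultilinearSeries r).comp s = A.compFormalMultilinearSeries (r.comp s) := by
  ext n v
  simp only [FormalMultilinearSeries.comp, ContinuousLinearMap.compFormalMultilinearSeries_apply,
    ContinuousMultilinearMap.sum_apply, FormalMultilinearSeries.compAlongComposition,
    ContinuousLinearMap.compContinuousMultilinearMap_coe, Function.comp_apply,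
    ContinuousMultilinearMap.compAlongComposition_apply, map_sum]

/-- Composing a formal series with the power series of a linear map. -/
theorem comp_linear (r : FormalMultilinearSeries ℂ E E) (A : E →L[ℂ] E) (n : ℕ) (v : Fin n → E) :
    (r.comp (A.fpowerSeries 0)) n v = r n (fun i => A (v i)) := by
  classical
  simp only [FormalMultilinearSeries.comp, ContinuousMultilinearMap.sum_apply]
  rw [Finset.sum_eq_single (Composition.ones n)]
  · rw [compAlongComposition_apply]
    apply r.congr (Composition.ones_length n)
    intro i him hin
    rw [applyComposition_ones]
    simp only [ContinuousLinearMap.fpowerSeries_apply_one,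
      continuousMultilinearCurryFin1_symm_apply]
    rfl
  · intro c _ hc
    obtain ⟨k, hk, lt_k⟩ : ∃ (k : ℕ), k ∈ Composition.blocks c ∧ 1 < k :=
      Composition.ne_ones_iff.1 hc
    obtain ⟨j, hj⟩ : ∃ (j : Fin c.blocks.length), c.blocks[j] = k := List.get_of_mem hk
    let j' : Fin c.length := ⟨j.val, c.blocks_length ▸ j.prop⟩
    have A1 : 1 < c.blocksFun j' := by convert lt_k; rw [← hj]; rfl
    rw [compAlongComposition_apply]
    apply ContinuousMultilinearMap.map_coord_zero _ j'
    dsimp [applyComposition]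
    have h2 : A.fpowerSeries 0 (c.blocksFun j') = 0 := by
      obtain ⟨d, hd⟩ : ∃ d, c.blocksFun j' = d + 2 := ⟨c.blocksFun j' - 2, by omega⟩
      rw [hd]
      exact A.fpowerSeries_apply_add_two 0 d
    rw [h2]
    rfl
  · simp

/-- The diagonal values of a composition only depend on the diagonal values of the inner
series. -/
theorem comp_diag_congr (r : FormalMultilinearSeries ℂ E E)
    {s s' : FormalMultilinearSeries ℂ E E}
    (hs : ∀ k y, s k (fun _ => y) = s' k (fun _ => y)) (n : ℕ) (x : E) :
    (r.comp s) n (fun _ => x) = (r.comp s') n (fun _ => x) := by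
  simp only [FormalMultilinearSeries.comp, ContinuousMultilinearMap.sum_apply]
  refine Finset.sum_congr rfl fun c _ => ?_
  rw [compAlongComposition_apply, compAlongComposition_apply]
  congr 1
  funext j
  exact hs _ x

/-- The `n`-th coefficient of a composition only depends on the coefficients of the outer
series up to `n`. -/
theorem comp_congr_le {r r' : FormalMultilinearSeries ℂ E E}
    (s : FormalMultilinearSeries ℂ E E) {n : ℕ} (h : ∀ k ≤ n, r k = r' k) :
    (r.comp s) n = (r'.comp s) n := by
  simp only [FormalMultilinearSeries.comp]
  refine Finset.sum_congr rfl fun c _ => ?_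
  unfold FormalMultilinearSeries.compAlongComposition
  rw [h c.length c.length_le]

/-- The identity function has the identity formal series at `0`. -/
theorem hasFPowerSeriesAt_id :
    HasFPowerSeriesAt (fun y : E => y) (FormalMultilinearSeries.id ℂ E 0) 0 := by
  have h := (ContinuousLinearMap.id ℂ E).hasFPowerSeriesAt 0
  have heq : (ContinuousLinearMap.id ℂ E).fpowerSeries 0 = FormalMultilinearSeries.id ℂ E 0 := by
    ext n v
    match n with
    | 0 => simp [ContinuousLinearMap.fpowerSeries]
    | 1 => rfl
    | (n + 2) => rfl
  rw [heq] at h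
  exact h

/-- Two functions with the same power series at `0` agree near `0`. -/
theorem eventuallyEq_of_hasFPowerSeriesAt {f g : E → E} {P : FormalMultilinearSeries ℂ E E}
    (hf : HasFPowerSeriesAt f P 0) (hg : HasFPowerSeriesAt g P 0) : f =ᶠ[𝓝 0] g := by
  obtain ⟨r1, h1⟩ := hf
  obtain ⟨r2, h2⟩ := hg
  have hb : EMetric.ball (0 : E) (min r1 r2) ∈ 𝓝 (0 : E) :=
    EMetric.ball_mem_nhds _ (lt_min h1.r_pos h2.r_pos)
  filter_upwards [hb] with y hy
  have hy1 : y ∈ EMetric.ball (0 : E) r1 := EMetric.ball_subset_ball (min_le_left _ _) hy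
  have hy2 : y ∈ EMetric.ball (0 : E) r2 := EMetric.ball_subset_ball (min_le_right _ _) hy
  have e1 := h1.sum hy1
  have e2 := h2.sum hy2
  rw [zero_add] at e1 e2
  rw [e1, e2]

/-- Two convergent power series of the same function have the same diagonal values. -/
theorem diag_eq_of_hasFPowerSeriesOnBall [CompleteSpace E] {g : E → E}
    {B C : FormalMultilinearSeries ℂ E E} {r r' : ENNReal}
    (hB : HasFPowerSeriesOnBall g B 0 r) (hC : HasFPowerSeriesOnBall g C 0 r')
    (n : ℕ) (y : E) : B n (fun _ => y) = C n (fun _ => y) := by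
  have h1 := hB.factorial_smul y n
  have h2 := hC.factorial_smul y n
  have key : (n.factorial : ℂ) • B n (fun _ => y) = (n.factorial : ℂ) • C n (fun _ => y) := by
    rw [Nat.cast_smul_eq_nsmul, Nat.cast_smul_eq_nsmul, h1, h2]
  exact smul_right_injective E (by exact_mod_cast n.factorial_ne_zero) key

end JetsAux

/-- The m-jets of formal linearizations of `f` coincide with the m-jets of convergent
linearizations: if `f` admits a convergent linearization, then every formal linearization
agrees up to order `m` with a convergent one. -/
theorem jets_of_formal_linearizations_are_jets_of_convergent_linearizations
    {E : Type*} [NormedAddCommGroup E] [NormedSpace ℂ E] [FiniteDimensional ℂ E]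
    (f : E → E) (hf : AnalyticAt ℂ f 0) (hf0 : f 0 = 0)
    (A : E →L[ℂ] E) (hA : A = fderiv ℂ f 0)
    (F : FormalMultilinearSeries ℂ E E) (hF : HasFPowerSeriesAt f F 0)
    -- a convergent (holomorphic) linearization `h₀` of `f`
    (h₀ : E → E) (hh₀a : AnalyticAt ℂ h₀ 0) (hh₀0 : h₀ 0 = 0)
    (hh₀1 : fderiv ℂ h₀ 0 = ContinuousLinearMap.id ℂ E)
    (hh₀lin : h₀ ∘ f =ᶠ[𝓝 0] (A : E → E) ∘ h₀)
    -- an arbitrary formal linearization `p` of `f`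
    (p : FormalMultilinearSeries ℂ E E)
    (hp0 : p 0 = 0)
    (hp1 : p 1 = (continuousMultilinearCurryFin1 ℂ E E).symm (ContinuousLinearMap.id ℂ E))
    (hpcomp : p.comp F = fun n => A.compContinuousMultilinearMap (p n))
    (m : ℕ) :
    ∃ (h : E → E) (P : FormalMultilinearSeries ℂ E E),
      AnalyticAt ℂ h 0 ∧ h 0 = 0 ∧
      fderiv ℂ h 0 = ContinuousLinearMap.id ℂ E ∧
      h ∘ f =ᶠ[𝓝 0] (A : E → E) ∘ h ∧
      HasFPowerSeriesAt h P 0 ∧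
      ∀ n ≤ m, P n = p n := by
  classical
  obtain ⟨H, hH⟩ := hh₀a
  -- basic facts about `H`, the series of `h₀`
  have hH00 : H 0 (fun _ => (0 : E)) = 0 := by rw [hH.coeff_zero]; exact hh₀0
  have hH1 : H 1 = (continuousMultilinearCurryFin1 ℂ E E).symm
      ((ContinuousLinearEquiv.refl ℂ E : E →L[ℂ] E)) := by
    have hfd := hH.fderiv_eq
    rw [hh₀1] at hfd
    rw [ContinuousLinearEquiv.coe_refl, hfd]
    exact ((continuousMultilinearCurryFin1 ℂ E E).symm_apply_apply (H 1)).symm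
  set i := ContinuousLinearEquiv.refl ℂ E with hi
  set L := H.leftInv i 0 with hLdef
  set R := H.rightInv i 0 with hRdef
  have hLR : L = R := H.leftInv_eq_rightInv i 0 hH1
  have hLH : L.comp H = FormalMultilinearSeries.id ℂ E 0 := H.leftInv_comp i 0 hH1
  have hH000 : H 0 (0 : Fin 0 → E) = 0 := hH00
  have hHR : H.comp R = FormalMultilinearSeries.id ℂ E 0 := by
    rw [H.comp_rightInv i 0 hH1, hH000]
  set q := p.comp L with hqdef
  have hqH : q.comp H = p := by
    rw [hqdef, FormalMultilinearSeries.comp_assoc, hLH, FormalMultilinearSeries.comp_id]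
  have hpc : p.comp F = A.compFormalMultilinearSeries p := hpcomp
  -- the key formal identity : `q` conjugates `B` to `A`
  set B := (H.comp F).comp R with hBdef
  have key : q.comp B = A.compFormalMultilinearSeries q := by
    calc q.comp B = (q.comp (H.comp F)).comp R :=
          (FormalMultilinearSeries.comp_assoc _ _ _).symm
      _ = ((q.comp H).comp F).comp R := by rw [FormalMultilinearSeries.comp_assoc q H F]
      _ = (A.compFormalMultilinearSeries p).comp R := by rw [hqH, hpc]
      _ = A.compFormalMultilinearSeries (p.comp R) := JetsAux.clm_comp_comp A p R
      _ = A.compFormalMultilinearSeries q := by rw [← hLR, ← hqdef]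
  -- convergence of `R` and its sum, a local inverse of `h₀`
  have hRpos : 0 < R.radius :=
    FormalMultilinearSeries.radius_rightInv_pos_of_radius_pos hH.radius_pos
  have hψball := R.hasFPowerSeriesOnBall hRpos
  have hψ : HasFPowerSeriesAt R.sum R 0 := hψball.hasFPowerSeriesAt
  have hψ0 : R.sum 0 = 0 := by
    have h1 := hψ.coeff_zero (fun _ => (0 : E))
    rw [hRdef, FormalMultilinearSeries.rightInv_coeff_zero] at h1
    simpa using h1.symm
  have hHat : HasFPowerSeriesAt h₀ H (R.sum 0) := by rw [hψ0]; exact hH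
  have hidAt : HasFPowerSeriesAt (h₀ ∘ R.sum) (FormalMultilinearSeries.id ℂ E 0) 0 := by
    have h2 := hHat.comp hψ
    rwa [hHR] at h2
  have hinv : h₀ ∘ R.sum =ᶠ[𝓝 (0 : E)] fun y => y :=
    JetsAux.eventuallyEq_of_hasFPowerSeriesAt hidAt JetsAux.hasFPowerSeriesAt_id
  -- `B` is a power series of `A` at 0
  have hfAt : HasFPowerSeriesAt (h₀ ∘ f) (H.comp F) 0 := by
    have hH' : HasFPowerSeriesAt h₀ H (f 0) := by rw [hf0]; exact hH
    exact hH'.comp hF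
  have hfAt' : HasFPowerSeriesAt ((h₀ ∘ f) ∘ R.sum) B 0 := by
    have h1 : HasFPowerSeriesAt (h₀ ∘ f) (H.comp F) (R.sum 0) := by rw [hψ0]; exact hfAt
    exact h1.comp hψ
  have hRtend : Filter.Tendsto R.sum (𝓝 0) (𝓝 (0 : E)) := by
    have h1 := hψ.continuousAt
    rwa [ContinuousAt, hψ0] at h1
  have hgerm : (h₀ ∘ f) ∘ R.sum =ᶠ[𝓝 (0 : E)] (A : E → E) := by
    have e1 : (h₀ ∘ f) ∘ R.sum =ᶠ[𝓝 (0 : E)] ((A : E → E) ∘ h₀) ∘ R.sum :=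
      hh₀lin.comp_tendsto hRtend
    have e2 : (A : E → E) ∘ (h₀ ∘ R.sum) =ᶠ[𝓝 (0 : E)] (A : E → E) ∘ (fun y => y) :=
      hinv.fun_comp (A : E → E)
    exact e1.trans e2
  have hAB : HasFPowerSeriesAt (A : E → E) B 0 := hfAt'.congr hgerm
  -- the diagonal of `B` agrees with the power series of `A`
  have hdiag : ∀ k (y : E), B k (fun _ => y) = (A.fpowerSeries 0) k (fun _ => y) := by
    intro k y
    obtain ⟨rB, hrB⟩ := hAB
    exact JetsAux.diag_eq_of_hasFPowerSeriesOnBall hrB (A.hasFPowerSeriesOnBall 0) k y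
  -- hence `q` commutes with `A` on the diagonal
  have hqA : ∀ n (x : E), q n (fun _ => A x) = A (q n (fun _ => x)) := by
    intro n x
    calc q n (fun _ => A x) = (q.comp (A.fpowerSeries 0)) n (fun _ => x) := by
          rw [JetsAux.comp_linear]
      _ = (q.comp B) n (fun _ => x) :=
          JetsAux.comp_diag_congr q (fun k y => (hdiag k y).symm) n x
      _ = (A.compFormalMultilinearSeries q) n (fun _ => x) := by rw [key]
      _ = A (q n (fun _ => x)) := rfl
  -- low order coefficients of `q`
  have hq0 : q 0 = 0 := by
    rw [hqdef, FormalMultilinearSeries.comp_coeff_zero'', hp0]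
  have hq1v : ∀ v : Fin 1 → E, q 1 v = v 0 := by
    intro v
    rw [hqdef, FormalMultilinearSeries.comp_coeff_one, hp1,
      continuousMultilinearCurryFin1_symm_apply, hLdef,
      FormalMultilinearSeries.leftInv_coeff_one]
    simp [hi]
  -- the truncated series and its (polynomial) sum
  set M := max m 1 with hM
  set T : FormalMultilinearSeries ℂ E E := fun n => if n ≤ M then q n else 0 with hT
  have hTle : ∀ k, k ≤ M → T k = q k := by
    intro k hk; rw [hT]; simp only [if_pos hk]
  have hTgt : ∀ k, ¬k ≤ M → T k = 0 := by
    intro k hk; rw [hT]; simp only [if_neg hk]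
  have hTtop : T.radius = ⊤ :=
    T.radius_eq_top_of_forall_image_add_eq_zero (M + 1) (fun k => hTgt _ (by omega))
  have hgball : HasFPowerSeriesOnBall T.sum T 0 ⊤ := by
    have h1 := T.hasFPowerSeriesOnBall (by rw [hTtop]; exact ENNReal.zero_lt_top)
    rwa [hTtop] at h1
  have hgAt : HasFPowerSeriesAt T.sum T 0 := hgball.hasFPowerSeriesAt
  have hg0 : T.sum 0 = 0 := by
    have h1 := hgAt.coeff_zero (fun _ => (0 : E))
    rw [hTle 0 (Nat.zero_le _), hq0] at h1
    simpa using h1.symm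
  -- the polynomial commutes with `A`
  have hgcomm : ∀ x : E, T.sum (A x) = A (T.sum x) := by
    intro x
    have hs1 : HasSum (fun n => T n (fun _ => A x)) (T.sum (A x)) := by
      have h1 := hgball.hasSum (y := A x) (EMetric.mem_ball.2 (edist_lt_top _ _))
      rwa [zero_add] at h1
    have hs2 : HasSum (fun n => T n (fun _ => x)) (T.sum x) := by
      have h1 := hgball.hasSum (y := x) (EMetric.mem_ball.2 (edist_lt_top _ _))
      rwa [zero_add] at h1
    have hs3 := hs2.mapL A
    have heq : (fun n => T n (fun _ => A x)) = fun n => A (T n (fun _ => x)) := by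
      funext n
      by_cases hn : n ≤ M
      · rw [hTle n hn]; exact hqA n x
      · rw [hTgt n hn]; simp
    rw [heq] at hs1
    exact hs1.unique hs3
  -- assembling the data
  have hgAt' : HasFPowerSeriesAt T.sum T (h₀ 0) := by rw [hh₀0]; exact hgAt
  have hP : HasFPowerSeriesAt (T.sum ∘ h₀) (T.comp H) 0 := hgAt'.comp hH
  refine ⟨T.sum ∘ h₀, T.comp H, hP.analyticAt, ?_, ?_, ?_, hP, ?_⟩
  · show T.sum (h₀ 0) = 0
    rw [hh₀0, hg0]
  · -- the derivative at 0 is the identity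
    have hP1 : (T.comp H) 1 =
        (continuousMultilinearCurryFin1 ℂ E E).symm (ContinuousLinearMap.id ℂ E) := by
      ext v
      rw [FormalMultilinearSeries.comp_coeff_one, hTle 1 (le_max_right m 1), hq1v, hH1,
        continuousMultilinearCurryFin1_symm_apply, continuousMultilinearCurryFin1_symm_apply]
      simp [hi]
    rw [hP.fderiv_eq, hP1]
    exact (continuousMultilinearCurryFin1 ℂ E E).apply_symm_apply _
  · -- the conjugacy near 0
    have e2 : T.sum ∘ (h₀ ∘ f) =ᶠ[𝓝 (0 : E)] T.sum ∘ ((A : E → E) ∘ h₀) :=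
      hh₀lin.fun_comp T.sum
    have e3 : T.sum ∘ ((A : E → E) ∘ h₀) = (A : E → E) ∘ (T.sum ∘ h₀) := by
      funext x; exact hgcomm (h₀ x)
    exact e2.trans (Filter.EventuallyEq.of_eq e3)
  · -- the jets agree up to order `m`
    intro n hn
    have h1 : (T.comp H) n = (q.comp H) n :=
      JetsAux.comp_congr_le H (fun k hk =>
        hTle k (le_trans hk (le_trans hn (le_max_left m 1))))
    rw [h1, hqH]
end

section
/- Let θ be an irrational real number and μ = exp(2πiθ). Let ε ∈ ℂ be a root of unity, let n ≥ 1, let a, b : Fin n → ℤ with b_j ≠ 0 for at least one j, and set λ_j = ε^{a_j} · μ^{b_j} (so each |λ_j| = 1). Then λ = (λ_1, …, λ_n) satisfies the n-dimensional Bruno condition if and only if θ satisfies the one-dimensional Bruno condition. -/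
private lemma aux_abs_pow_sub_one (z : ℂ) (hz : ‖z‖ = 1) (q : ℕ) :
    ‖z ^ q - 1‖ ≤ q * ‖z - 1‖ := by
  calc ‖z ^ q - 1‖
      = ‖(∑ i ∈ Finset.range q, z ^ i) * (z - 1)‖ := by rw [geom_sum_mul]
    _ = ‖∑ i ∈ Finset.range q, z ^ i‖ * ‖z - 1‖ := norm_mul _ _
    _ ≤ q * ‖z - 1‖ := by
        apply mul_le_mul_of_nonneg_right _ (norm_nonneg _)
        calc ‖∑ i ∈ Finset.range q, z ^ i‖
            ≤ ∑ i ∈ Finset.range q, ‖z ^ i‖ := norm_sum_le _ _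
          _ = q := by simp [norm_pow, hz]

private lemma aux_abs_zpow_sub_one (z : ℂ) (hz : ‖z‖ = 1) (d : ℤ) :
    ‖z ^ d - 1‖ = ‖z ^ d.natAbs - 1‖ := by
  have hz0 : z ≠ 0 := by intro h; rw [h] at hz; simp at hz
  rcases le_or_gt 0 d with h | h
  · lift d to ℕ using h
    rw [zpow_natCast]
    simp
  · have key : (d.natAbs : ℤ) = -d := Int.ofNat_natAbs_of_nonpos h.le
    have h1 : z ^ d - 1 = z ^ d * (1 - z ^ d.natAbs) := by
      rw [mul_sub, mul_one, ← zpow_natCast z d.natAbs, ← zpow_add₀ hz0, key, add_neg_cancel,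
        zpow_zero]
    rw [h1, norm_mul, norm_zpow, hz, one_zpow, one_mul, norm_sub_rev]

private lemma aux_prod_zpow {n : ℕ} {x : ℂ} (hx : x ≠ 0) (c : Fin n → ℤ) :
    ∏ k, x ^ c k = x ^ (∑ k, c k) := by
  induction (Finset.univ : Finset (Fin n)) using Finset.cons_induction with
  | empty => simp
  | cons a s ha ih => rw [Finset.prod_cons, Finset.sum_cons, ih, zpow_add₀ hx]

private lemma aux_summable (f g : ℕ → ℝ) (B C : ℝ) (r : ℕ)
    (hf : ∀ k, B ≤ f k) (hfg : ∀ k, f k ≤ C + g (k + r))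
    (hsum : Summable fun k => ((2 : ℝ) ^ k)⁻¹ * g k) :
    Summable fun k => ((2 : ℝ) ^ k)⁻¹ * f k := by
  have hgeo : ∀ c : ℝ, Summable fun k : ℕ => ((2 : ℝ) ^ k)⁻¹ * c := by
    intro c
    have := (summable_geometric_of_lt_one (r := (2:ℝ)⁻¹) (by norm_num) (by norm_num)).mul_right c
    simpa [inv_pow] using this
  have hg' : Summable fun k => ((2 : ℝ) ^ k)⁻¹ * g (k + r) := by
    have h1 : Summable fun k => ((2 : ℝ) ^ (k + r))⁻¹ * g (k + r) :=
      (summable_nat_add_iff r).mpr hsum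
    have h2 := h1.mul_left ((2 : ℝ) ^ r)
    apply h2.congr
    intro k
    field_simp [pow_add]
    ring
  have hf' : Summable fun k => ((2 : ℝ) ^ k)⁻¹ * (f k - B) := by
    refine Summable.of_nonneg_of_le
      (f := fun k => ((2 : ℝ) ^ k)⁻¹ * (C - B) + ((2 : ℝ) ^ k)⁻¹ * g (k + r))
      (fun k => mul_nonneg (by positivity) (by linarith [hf k]))
      (fun k => ?_) ((hgeo (C - B)).add hg')
    have h3 : f k - B ≤ (C - B) + g (k + r) := by linarith [hfg k]
    calc ((2 : ℝ) ^ k)⁻¹ * (f k - B) ≤ ((2 : ℝ) ^ k)⁻¹ * ((C - B) + g (k + r)) := by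
          apply mul_le_mul_of_nonneg_left h3 (by positivity)
      _ = _ := by ring
  have := hf'.add (hgeo B)
  apply this.congr
  intro k
  ring

/-- The set of small divisors `|λ^i − λ_j|` of order at most `m` for a tuple `λ` of unit
complex numbers. -/
def smallDivisors {n : ℕ} (lam : Fin n → ℂ) (m : ℕ) : Set ℝ :=
  {r | ∃ (j : Fin n) (i : Fin n → ℕ),
    2 ≤ ∑ k, i k ∧ ∑ k, i k ≤ m ∧ (∏ k, lam k ^ i k) ≠ lam j ∧
    r = ‖(∏ k, lam k ^ i k) - lam j‖}

/-- `Ω_λ(m)`, the smallest small divisor of order at most `m`. -/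
noncomputable def Omega {n : ℕ} (lam : Fin n → ℂ) (m : ℕ) : ℝ :=
  sInf (smallDivisors lam m)

/-- The `n`-dimensional Bruno condition:
`∑_k 2^{-k} log(Ω_λ(2^{k+1})⁻¹) < ∞`. -/
def BrunoCondition {n : ℕ} (lam : Fin n → ℂ) : Prop :=
  Summable fun k : ℕ => ((2 : ℝ) ^ k)⁻¹ * Real.log (Omega lam (2 ^ (k + 1)))⁻¹

/-- `ω_θ(m) = min { |μ^k − μ| : 2 ≤ k ≤ m }` for `μ = exp(2πiθ)`. -/
noncomputable def omegaOne (θ : ℝ) (m : ℕ) : ℝ :=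
  sInf {r | ∃ k : ℕ, 2 ≤ k ∧ k ≤ m ∧
    r = ‖Complex.exp (2 * Real.pi * Complex.I * θ) ^ k -
      Complex.exp (2 * Real.pi * Complex.I * θ)‖}

/-- The one-dimensional Bruno condition for an irrational `θ`. -/
def BrunoConditionOne (θ : ℝ) : Prop :=
  Summable fun j : ℕ => ((2 : ℝ) ^ j)⁻¹ * Real.log (omegaOne θ (2 ^ (j + 1)))⁻¹

/-- For `λ_j = ε^{a_j} μ^{b_j}` with `ε` a root of unity, `μ = exp(2πiθ)`, `θ` irrational,
and some `b_j ≠ 0`, the tuple `λ` satisfies the `n`-dimensional Bruno condition if and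
only if `θ` satisfies the one-dimensional Bruno condition. -/
theorem bruno_of_resonant_tuple_iff_bruno_of_theta
    (θ : ℝ) (hθ : Irrational θ)
    (μ : ℂ) (hμ : μ = Complex.exp (2 * Real.pi * Complex.I * θ))
    (ε : ℂ) (hε : ∃ k : ℕ, 0 < k ∧ ε ^ k = 1)
    (n : ℕ) (hn : 1 ≤ n) (a b : Fin n → ℤ) (hb : ∃ j, b j ≠ 0)
    (lam : Fin n → ℂ) (hlam : ∀ j, lam j = ε ^ (a j) * μ ^ (b j)) :
    BrunoCondition lam ↔ BrunoConditionOne θ := by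
  classical
  obtain ⟨q, hq0, hq1⟩ := hε
  obtain ⟨j₀, hj₀⟩ := hb
  have hqR : (0 : ℝ) < q := by exact_mod_cast hq0
  have hε0 : ε ≠ 0 := by
    intro h; rw [h, zero_pow hq0.ne'] at hq1; exact zero_ne_one hq1
  have hμ0 : μ ≠ 0 := by rw [hμ]; exact Complex.exp_ne_zero _
  have hμabs : ‖μ‖ = 1 := by
    rw [hμ, Complex.norm_exp]
    norm_num [Complex.mul_re]
  have hεabs : ‖ε‖ = 1 := by
    have h : (‖ε‖) ^ q = 1 := by rw [← norm_pow, hq1, norm_one]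
    rcases lt_trichotomy (‖ε‖) 1 with hlt | heq | hgt
    · have := pow_lt_one₀ (norm_nonneg _) hlt hq0.ne'
      linarith
    · exact heq
    · have := one_lt_pow₀ hgt hq0.ne'
      linarith
  have hμzpow : ∀ s : ℤ, s ≠ 0 → μ ^ s ≠ 1 := by
    intro s hs h
    rw [hμ, ← Complex.exp_int_mul, Complex.exp_eq_one_iff] at h
    obtain ⟨m, hm⟩ := h
    have hπ : (2 * (Real.pi : ℂ) * Complex.I) ≠ 0 := by
      simp [Real.pi_ne_zero, Complex.I_ne_zero, Complex.ofReal_ne_zero]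
    have h2 : ((s : ℂ) * (θ : ℂ)) * (2 * (Real.pi : ℂ) * Complex.I)
        = (m : ℂ) * (2 * (Real.pi : ℂ) * Complex.I) := by rw [← hm]; ring
    have h3 : (s : ℂ) * (θ : ℂ) = (m : ℂ) := mul_right_cancel₀ hπ h2
    have h4 : (s : ℝ) * θ = (m : ℝ) := by exact_mod_cast h3
    have hs' : (s : ℝ) ≠ 0 := Int.cast_ne_zero.mpr hs
    refine hθ ⟨(m : ℚ) / (s : ℚ), ?_⟩
    push_cast
    rw [div_eq_iff hs']
    linarith [h4]
  have hεq : ∀ A : ℤ, (ε ^ A) ^ q = 1 := by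
    intro A
    rw [← zpow_natCast (ε ^ A) q, ← zpow_mul, mul_comm, zpow_mul, zpow_natCast, hq1, one_zpow]
  have hne1 : ∀ A d : ℤ, d ≠ 0 → ε ^ A * μ ^ d ≠ 1 := by
    intro A d hd h
    have h2 : (ε ^ A * μ ^ d) ^ q = 1 := by rw [h, one_pow]
    rw [mul_pow, hεq, one_mul, ← zpow_natCast (μ ^ d) q, ← zpow_mul] at h2
    exact hμzpow (d * q) (mul_ne_zero hd (Int.natCast_ne_zero.mpr hq0.ne')) h2
  have habs1 : ∀ A d : ℤ, ‖ε ^ A * μ ^ d‖ = 1 := by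
    intro A d
    rw [norm_mul, norm_zpow, norm_zpow, hεabs, hμabs, one_zpow, one_zpow, one_mul]
  have hprod : ∀ i : Fin n → ℕ,
      ∏ k, lam k ^ i k = ε ^ (∑ k, (i k : ℤ) * a k) * μ ^ (∑ k, (i k : ℤ) * b k) := by
    intro i
    have h : ∀ k, lam k ^ i k = ε ^ ((i k : ℤ) * a k) * μ ^ ((i k : ℤ) * b k) := by
      intro k
      rw [hlam k, mul_pow, ← zpow_natCast (ε ^ a k) (i k), ← zpow_mul,
        ← zpow_natCast (μ ^ b k) (i k), ← zpow_mul, mul_comm (a k), mul_comm (b k)]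
    rw [Finset.prod_congr rfl (fun k _ => h k), Finset.prod_mul_distrib,
      aux_prod_zpow hε0, aux_prod_zpow hμ0]
  have hrep : ∀ (j : Fin n) (i : Fin n → ℕ),
      (∏ k, lam k ^ i k) - lam j
        = ε ^ (a j) * μ ^ (b j) *
          (ε ^ ((∑ k, (i k : ℤ) * a k) - a j) * μ ^ ((∑ k, (i k : ℤ) * b k) - b j) - 1) := by
    intro j i
    rw [hprod i, hlam j, mul_sub, mul_one]
    congr 1
    have e1 : ε ^ ((∑ k, (i k : ℤ) * a k) - a j) * ε ^ (a j) = ε ^ (∑ k, (i k : ℤ) * a k) := by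
      rw [← zpow_add₀ hε0, sub_add_cancel]
    have e2 : μ ^ ((∑ k, (i k : ℤ) * b k) - b j) * μ ^ (b j) = μ ^ (∑ k, (i k : ℤ) * b k) := by
      rw [← zpow_add₀ hμ0, sub_add_cancel]
    rw [← e1, ← e2]
    ring
  have habs_rep : ∀ (j : Fin n) (i : Fin n → ℕ),
      ‖(∏ k, lam k ^ i k) - lam j‖
        = ‖ε ^ ((∑ k, (i k : ℤ) * a k) - a j)
            * μ ^ ((∑ k, (i k : ℤ) * b k) - b j) - 1‖ := by
    intro j i
    rw [hrep j i, norm_mul, habs1, one_mul]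
  have hne_rep : ∀ (j : Fin n) (i : Fin n → ℕ),
      ((∏ k, lam k ^ i k) ≠ lam j) ↔
        (ε ^ ((∑ k, (i k : ℤ) * a k) - a j)
            * μ ^ ((∑ k, (i k : ℤ) * b k) - b j) ≠ 1) := by
    intro j i
    rw [← sub_ne_zero, hrep j i, ← sub_ne_zero (b := (1 : ℂ))]
    simp [mul_eq_zero, zpow_ne_zero _ hε0, zpow_ne_zero _ hμ0]
  -- bound on |b|
  set D : ℕ := Finset.univ.sup fun j => (b j).natAbs with hDdef
  have hD : ∀ j, (b j).natAbs ≤ D := fun j => Finset.le_sup (f := fun j => (b j).natAbs) (Finset.mem_univ j)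
  have hD1 : 1 ≤ D := le_trans (Int.natAbs_pos.mpr hj₀) (hD j₀)
  set β : ℕ := (b j₀).natAbs with hβdef
  have hβ1 : 1 ≤ β := Int.natAbs_pos.mpr hj₀
  have hd_bound : ∀ (j : Fin n) (i : Fin n → ℕ) (m : ℕ), (∑ k, i k) ≤ m →
      ((∑ k, (i k : ℤ) * b k) - b j).natAbs ≤ (m + 1) * D := by
    intro j i m him
    rw [← Nat.cast_le (α := ℤ), Int.natCast_natAbs]
    have h1 : |∑ k, (i k : ℤ) * b k| ≤ ∑ k, (i k : ℤ) * D := by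
      refine le_trans (Finset.abs_sum_le_sum_abs _ _) (Finset.sum_le_sum ?_)
      intro k _
      rw [abs_mul, abs_of_nonneg (by positivity : (0:ℤ) ≤ (i k : ℤ))]
      refine mul_le_mul_of_nonneg_left ?_ (by positivity)
      rw [Int.abs_eq_natAbs]
      exact_mod_cast hD k
    have h2 : |b j| ≤ (D : ℤ) := by
      rw [Int.abs_eq_natAbs]; exact_mod_cast hD j
    have h3 : ∑ k, (i k : ℤ) * D = (∑ k, (i k : ℤ)) * D := by rw [← Finset.sum_mul]
    have h4 : (∑ k, (i k : ℤ)) * (D : ℤ) ≤ (m : ℤ) * D := by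
      refine mul_le_mul_of_nonneg_right ?_ (by positivity)
      push_cast
      exact_mod_cast him
    have h5 : |(∑ k, (i k : ℤ) * b k) - b j| ≤ |∑ k, (i k : ℤ) * b k| + |b j| := by
      rw [sub_eq_add_neg]
      exact le_trans (abs_add_le _ _) (by rw [abs_neg])
    push_cast
    rw [h3] at h1
    linarith
  -- c₀ : min distance among nontrivial q-th roots of unity
  set T : Finset ℕ := (Finset.range q).filter (fun t => ε ^ t ≠ 1) with hTdef
  set c₀ : ℝ := if hT : T.Nonempty then T.inf' hT (fun t => ‖ε ^ t - 1‖) else 1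
    with hc₀def
  have hc₀pos : 0 < c₀ := by
    rw [hc₀def]
    split
    · rename_i hT
      rw [Finset.lt_inf'_iff]
      intro t ht
      exact norm_pos_iff.mpr (sub_ne_zero.mpr (Finset.mem_filter.mp ht).2)
    · norm_num
  have hεA : ∀ A : ℤ, ∃ t : ℕ, t < q ∧ ε ^ A = ε ^ t := by
    intro A
    refine ⟨(A % q).toNat, ?_, ?_⟩
    · have h1 : A % (q : ℤ) < q := Int.emod_lt_of_pos A (by exact_mod_cast hq0)
      omega
    · have h0 : (0:ℤ) ≤ A % q := Int.emod_nonneg A (by exact_mod_cast hq0.ne')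
      have h2 : ε ^ A = ε ^ ((q:ℤ) * (A / q) + A % q) := by rw [Int.mul_ediv_add_emod]
      rw [h2, zpow_add₀ hε0, zpow_mul, zpow_natCast, hq1, one_zpow, one_mul,
        ← zpow_natCast ε (A % (q:ℤ)).toNat, Int.toNat_of_nonneg h0]
  have hc₀le : ∀ A : ℤ, ε ^ A ≠ 1 → c₀ ≤ ‖ε ^ A - 1‖ := by
    intro A hA
    obtain ⟨t, htq, ht⟩ := hεA A
    have htT : t ∈ T := Finset.mem_filter.mpr
      ⟨Finset.mem_range.mpr htq, by rw [← ht]; exact hA⟩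
    rw [ht, hc₀def, dif_pos ⟨t, htT⟩]
    exact Finset.inf'_le _ htT
  -- the omegaOne set in terms of μ
  have homega : ∀ m : ℕ, omegaOne θ m
      = sInf {r : ℝ | ∃ k : ℕ, 2 ≤ k ∧ k ≤ m ∧ r = ‖μ ^ k - μ‖} := by
    intro m
    simp only [omegaOne, ← hμ]
  have hWbdd : ∀ m : ℕ,
      BddBelow {r : ℝ | ∃ k : ℕ, 2 ≤ k ∧ k ≤ m ∧ r = ‖μ ^ k - μ‖} := by
    intro m
    exact ⟨0, by rintro r ⟨k, -, -, rfl⟩; exact norm_nonneg _⟩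
  have hWne : ∀ m : ℕ, 2 ≤ m →
      Set.Nonempty {r : ℝ | ∃ k : ℕ, 2 ≤ k ∧ k ≤ m ∧ r = ‖μ ^ k - μ‖} := by
    intro m hm
    exact ⟨_, 2, le_rfl, hm, rfl⟩
  have homega_le : ∀ m k : ℕ, 2 ≤ k → k ≤ m → omegaOne θ m ≤ ‖μ ^ k - μ‖ := by
    intro m k h2 hkm
    rw [homega]
    exact csInf_le (hWbdd m) ⟨k, h2, hkm, rfl⟩
  have hμpow_ne : ∀ k : ℕ, 2 ≤ k → μ ^ k ≠ μ := by
    intro k hk h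
    have h1 : μ ^ ((k : ℤ) - 1) = 1 := by
      rw [zpow_sub₀ hμ0, zpow_one, zpow_natCast, h, div_self hμ0]
    exact hμzpow _ (by omega) h1
  have hωpos : ∀ m : ℕ, 2 ≤ m → 0 < omegaOne θ m := by
    intro m hm
    rw [homega]
    have hfin : Set.Finite {r : ℝ | ∃ k : ℕ, 2 ≤ k ∧ k ≤ m ∧ r = ‖μ ^ k - μ‖} := by
      refine Set.Finite.subset ((Set.finite_Icc 2 m).image
        (fun k : ℕ => ‖μ ^ k - μ‖)) ?_
      rintro r ⟨k, h1, h2, rfl⟩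
      exact ⟨k, ⟨h1, h2⟩, rfl⟩
    obtain ⟨k, h1, h2, hr⟩ := (hWne m hm).csInf_mem hfin
    rw [hr]
    exact norm_pos_iff.mpr (sub_ne_zero.mpr (hμpow_ne k h1))
  have hωle2 : ∀ m : ℕ, 2 ≤ m → omegaOne θ m ≤ 2 := by
    intro m hm
    refine le_trans (homega_le m 2 le_rfl hm) ?_
    calc ‖μ ^ 2 - μ‖ ≤ ‖μ ^ 2‖ + ‖-μ‖ := by
          rw [sub_eq_add_neg]; exact norm_add_le _ _
      _ ≤ 2 := by rw [norm_pow, hμabs, norm_neg, hμabs]; norm_num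
  have hωanti : ∀ m m' : ℕ, 2 ≤ m → m ≤ m' → omegaOne θ m' ≤ omegaOne θ m := by
    intro m m' hm hmm
    rw [homega, homega]
    refine csInf_le_csInf (hWbdd m') (hWne m hm) ?_
    rintro r ⟨k, h1, h2, rfl⟩
    exact ⟨k, h1, le_trans h2 hmm, rfl⟩
  -- Omega machinery
  have hSbdd : ∀ m : ℕ, BddBelow (smallDivisors lam m) := by
    intro m
    exact ⟨0, by rintro r ⟨j, i, -, -, -, rfl⟩; exact norm_nonneg _⟩
  have hipow : ∀ c : ℕ, (∏ k, lam k ^ (if k = j₀ then c else 0)) = lam j₀ ^ c := by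
    intro c
    rw [Finset.prod_eq_single j₀ (fun t _ ht => by simp [if_neg ht])
      (fun h => absurd (Finset.mem_univ _) h)]
    simp
  have hisum : ∀ c : ℕ, (∑ k, if k = j₀ then c else 0) = c := by
    intro c
    rw [Finset.sum_eq_single j₀ (fun t _ ht => by simp [if_neg ht])
      (fun h => absurd (Finset.mem_univ _) h)]
    simp
  have hlam0 : lam j₀ ≠ 0 := by
    rw [hlam j₀]
    exact mul_ne_zero (zpow_ne_zero _ hε0) (zpow_ne_zero _ hμ0)
  have hlamabs : ‖lam j₀‖ = 1 := by rw [hlam j₀]; exact habs1 _ _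
  have hlamne : lam j₀ ^ 2 ≠ lam j₀ := by
    intro h
    have h1 : lam j₀ * lam j₀ = 1 * lam j₀ := by
      rw [one_mul, ← pow_two]; exact h
    have h2 : lam j₀ = 1 := mul_right_cancel₀ hlam0 h1
    rw [hlam j₀] at h2
    exact hne1 (a j₀) (b j₀) hj₀ h2
  have hSne : ∀ m : ℕ, 2 ≤ m → (smallDivisors lam m).Nonempty := by
    intro m hm
    refine ⟨_, j₀, fun k => if k = j₀ then 2 else 0, ?_, ?_, ?_, rfl⟩
    · rw [hisum]
    · rw [hisum]; exact hm
    · rw [hipow]; exact hlamne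
  have hΩle2 : ∀ m : ℕ, 2 ≤ m → Omega lam m ≤ 2 := by
    intro m hm
    refine le_trans (csInf_le (hSbdd m)
      ⟨j₀, fun k => if k = j₀ then 2 else 0, by rw [hisum], by rw [hisum]; exact hm,
        by rw [hipow]; exact hlamne, rfl⟩) ?_
    rw [hipow]
    calc ‖lam j₀ ^ 2 - lam j₀‖
        ≤ ‖lam j₀ ^ 2‖ + ‖-lam j₀‖ := by
          rw [sub_eq_add_neg]; exact norm_add_le _ _
      _ ≤ 2 := by rw [norm_pow, hlamabs, norm_neg, hlamabs]; norm_num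
  have hΩanti : ∀ m m' : ℕ, 2 ≤ m → m ≤ m' → Omega lam m' ≤ Omega lam m := by
    intro m m' hm hmm
    refine csInf_le_csInf (hSbdd m') (hSne m hm) ?_
    rintro r ⟨j, i, h1, h2, h3, rfl⟩
    exact ⟨j, i, h1, le_trans h2 hmm, h3, rfl⟩
  -- lower bound for Omega in terms of omegaOne
  have hΩlow : ∀ m : ℕ, 2 ≤ m →
      min c₀ ((q:ℝ)⁻¹ * omegaOne θ (q * (m + 1) * D + 1)) ≤ Omega lam m := by
    intro m hm
    refine le_csInf (hSne m hm) ?_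
    rintro r ⟨j, i, hi2, him, hne, rfl⟩
    set A : ℤ := (∑ k, (i k : ℤ) * a k) - a j with hA
    set d : ℤ := (∑ k, (i k : ℤ) * b k) - b j with hd
    have habs : ‖(∏ k, lam k ^ i k) - lam j‖ = ‖ε ^ A * μ ^ d - 1‖ :=
      habs_rep j i
    have hne' : ε ^ A * μ ^ d ≠ 1 := (hne_rep j i).mp hne
    rcases eq_or_ne d 0 with hd0 | hd0
    · rw [habs, hd0, zpow_zero, mul_one]
      rw [hd0, zpow_zero, mul_one] at hne'
      exact le_trans (min_le_left _ _) (hc₀le A hne')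
    · refine le_trans (min_le_right _ _) ?_
      have h1 : ‖(ε ^ A * μ ^ d) ^ q - 1‖ ≤ q * ‖ε ^ A * μ ^ d - 1‖ :=
        aux_abs_pow_sub_one _ (habs1 A d) q
      have h2 : (ε ^ A * μ ^ d) ^ q = μ ^ (d * q) := by
        rw [mul_pow, hεq, one_mul, ← zpow_natCast (μ ^ d) q, ← zpow_mul]
      have h3 : ‖μ ^ (d * q) - 1‖
          = ‖μ ^ ((d * q).natAbs) - 1‖ := aux_abs_zpow_sub_one μ hμabs _
      have h4 : ‖μ ^ ((d * q).natAbs) - 1‖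
          = ‖μ ^ ((d * q).natAbs + 1) - μ‖ := by
        have e : μ ^ ((d * q).natAbs + 1) - μ = μ * (μ ^ ((d * q).natAbs) - 1) := by ring
        rw [e, norm_mul, hμabs, one_mul]
      have hna : (d * q).natAbs = d.natAbs * q := by
        rw [Int.natAbs_mul, Int.natAbs_natCast]
      have hd1 : 1 ≤ d.natAbs := Int.natAbs_pos.mpr hd0
      have hdm : d.natAbs ≤ (m + 1) * D := hd_bound j i m him
      have h5 : omegaOne θ (q * (m + 1) * D + 1)
          ≤ ‖μ ^ ((d * q).natAbs + 1) - μ‖ := by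
        refine homega_le _ _ ?_ ?_
        · rw [hna]; nlinarith [hq0, hd1]
        · rw [hna]
          have : d.natAbs * q ≤ (m + 1) * D * q := Nat.mul_le_mul_right q hdm
          nlinarith [this]
      rw [habs]
      rw [h2, h3, h4] at h1
      rw [inv_mul_le_iff₀ hqR]
      exact le_trans h5 (by rw [← h4, ← h3]; exact le_trans (le_of_eq rfl) (by linarith [h1]))
  have hΩpos : ∀ m : ℕ, 2 ≤ m → 0 < Omega lam m := by
    intro m hm
    refine lt_of_lt_of_le (lt_min hc₀pos ?_) (hΩlow m hm)
    refine mul_pos (by positivity) (hωpos _ ?_)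
    have h6 : (m + 1) ≤ q * (m + 1) * D := by
      calc m + 1 = 1 * (m + 1) * 1 := by ring
        _ ≤ q * (m + 1) * D := Nat.mul_le_mul (Nat.mul_le_mul hq0 le_rfl) hD1
    omega
  -- lower bound for omegaOne in terms of Omega
  have hωlow : ∀ m : ℕ, 2 ≤ m →
      (((q * β : ℕ) : ℝ))⁻¹ * Omega lam (q * m) ≤ omegaOne θ m := by
    intro m hm
    rw [homega]
    refine le_csInf (hWne m hm) ?_
    rintro r ⟨k, hk2, hkm, rfl⟩
    set s : ℕ := q * (k - 1) with hs
    have hs1 : 1 ≤ s := by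
      calc 1 = 1 * 1 := by ring
        _ ≤ q * (k - 1) := Nat.mul_le_mul hq0 (by omega)
    have hpows : lam j₀ ^ s = μ ^ (b j₀ * (s : ℤ)) := by
      rw [hlam j₀, mul_pow, ← zpow_natCast (ε ^ a j₀) s, ← zpow_mul,
        ← zpow_natCast (μ ^ b j₀) s, ← zpow_mul]
      have e : a j₀ * (s : ℤ) = (q : ℤ) * (a j₀ * ((k - 1 : ℕ) : ℤ)) := by
        rw [hs]; push_cast; ring
      rw [e, zpow_mul, zpow_natCast, hq1, one_zpow, one_mul]
    have hbs0 : b j₀ * (s : ℤ) ≠ 0 :=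
      mul_ne_zero hj₀ (Int.natCast_ne_zero.mpr (by omega))
    have hne2 : lam j₀ ^ (s + 1) ≠ lam j₀ := by
      intro h
      have h1 : lam j₀ ^ s * lam j₀ = 1 * lam j₀ := by
        rw [one_mul, ← pow_succ]; exact h
      have h2 : lam j₀ ^ s = 1 := mul_right_cancel₀ hlam0 h1
      rw [hpows] at h2
      exact hμzpow _ hbs0 h2
    have hsle : s + 1 ≤ q * m := by
      have h1 : q * (k - 1) + q ≤ q * m := by
        rw [← Nat.mul_succ]
        exact Nat.mul_le_mul_left q (by omega)
      omega
    have hmem : ‖lam j₀ ^ (s + 1) - lam j₀‖ ∈ smallDivisors lam (q * m) := by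
      refine ⟨j₀, fun t => if t = j₀ then s + 1 else 0, ?_, ?_, ?_, ?_⟩
      · rw [hisum]; omega
      · rw [hisum]; exact hsle
      · rw [hipow]; exact hne2
      · rw [hipow]
    have hval : ‖lam j₀ ^ (s + 1) - lam j₀‖ = ‖μ ^ (β * s) - 1‖ := by
      have e : lam j₀ ^ (s + 1) - lam j₀ = lam j₀ * (lam j₀ ^ s - 1) := by
        rw [pow_succ]; ring
      rw [e, norm_mul, hlamabs, one_mul, hpows, aux_abs_zpow_sub_one μ hμabs]
      congr 2
      rw [Int.natAbs_mul, Int.natAbs_natCast, hβdef]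
    have h6 : ‖μ ^ (β * s) - 1‖
        ≤ ((q * β : ℕ) : ℝ) * ‖μ ^ (k - 1) - 1‖ := by
      have e2 : β * s = (k - 1) * (q * β) := by rw [hs]; ring
      rw [e2, pow_mul]
      exact_mod_cast aux_abs_pow_sub_one (μ ^ (k - 1))
        (by rw [norm_pow, hμabs, one_pow]) (q * β)
    have h7 : ‖μ ^ (k - 1) - 1‖ = ‖μ ^ k - μ‖ := by
      have e3 : μ ^ k - μ = μ * (μ ^ (k - 1) - 1) := by
        have ek : k - 1 + 1 = k := by omega
        calc μ ^ k - μ = μ ^ (k - 1 + 1) - μ := by rw [ek]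
          _ = μ * (μ ^ (k - 1) - 1) := by rw [pow_succ]; ring
      rw [e3, norm_mul, hμabs, one_mul]
    have h8 : Omega lam (q * m) ≤ ‖μ ^ (β * s) - 1‖ := by
      rw [hval] at hmem
      exact csInf_le (hSbdd _) hmem
    have hqβ : (0:ℝ) < ((q * β : ℕ) : ℝ) := by
      have : 1 ≤ q * β := Nat.mul_le_mul hq0 hβ1
      exact_mod_cast lt_of_lt_of_le zero_lt_one (by exact_mod_cast this)
    rw [inv_mul_le_iff₀ hqβ]
    calc Omega lam (q * m) ≤ ‖μ ^ (β * s) - 1‖ := h8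
      _ ≤ ((q * β : ℕ) : ℝ) * ‖μ ^ (k - 1) - 1‖ := h6
      _ = ((q * β : ℕ) : ℝ) * ‖μ ^ k - μ‖ := by rw [h7]
  -- log bounds
  have h2pow : ∀ k : ℕ, 2 ≤ 2 ^ (k + 1) := by
    intro k
    calc 2 = 2 ^ 1 := (pow_one 2).symm
      _ ≤ 2 ^ (k + 1) := Nat.pow_le_pow_right (by norm_num) (by omega)
  have hlog_f_low : ∀ k : ℕ, -Real.log 2 ≤ Real.log (Omega lam (2 ^ (k + 1)))⁻¹ := by
    intro k
    rw [Real.log_inv]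
    have := Real.log_le_log (hΩpos _ (h2pow k)) (hΩle2 _ (h2pow k))
    have h2 : Real.log ((2:ℕ):ℝ) = Real.log 2 := by norm_num
    linarith
  have hlog_g_low : ∀ k : ℕ, -Real.log 2 ≤ Real.log (omegaOne θ (2 ^ (k + 1)))⁻¹ := by
    intro k
    rw [Real.log_inv]
    have := Real.log_le_log (hωpos _ (h2pow k)) (hωle2 _ (h2pow k))
    linarith
  constructor
  · -- BrunoCondition → BrunoConditionOne
    intro h
    show Summable fun j : ℕ => ((2 : ℝ) ^ j)⁻¹ * Real.log (omegaOne θ (2 ^ (j + 1)))⁻¹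
    refine aux_summable _ (fun k => Real.log (Omega lam (2 ^ (k + 1)))⁻¹) (-Real.log 2)
      (Real.log (((q * β : ℕ)) : ℝ)) q hlog_g_low ?_ h
    intro j
    have h2j := h2pow j
    have hqm2 : 2 ≤ q * 2 ^ (j + 1) := le_trans h2j (Nat.le_mul_of_pos_left _ hq0)
    have hmono : q * 2 ^ (j + 1) ≤ 2 ^ ((j + q) + 1) := by
      have h1 : q ≤ 2 ^ q := (Nat.lt_two_pow_self (n := q)).le
      calc q * 2 ^ (j + 1) ≤ 2 ^ q * 2 ^ (j + 1) := Nat.mul_le_mul_right _ h1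
        _ = 2 ^ ((j + q) + 1) := by rw [← pow_add]; ring_nf
    have hΩ1 := hΩpos _ hqm2
    have hΩ2 := hΩpos _ (h2pow (j + q))
    have hω1 := hωpos _ h2j
    have hqβ : (0:ℝ) < ((q * β : ℕ) : ℝ) := by
      have : 1 ≤ q * β := Nat.mul_le_mul hq0 hβ1
      exact_mod_cast lt_of_lt_of_le zero_lt_one (by exact_mod_cast this)
    have key := hωlow (2 ^ (j + 1)) h2j
    have l1 : Real.log ((((q * β : ℕ)) : ℝ))⁻¹ + Real.log (Omega lam (q * 2 ^ (j + 1)))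
        ≤ Real.log (omegaOne θ (2 ^ (j + 1))) := by
      rw [← Real.log_mul (by positivity) (ne_of_gt hΩ1)]
      exact Real.log_le_log (by positivity) key
    have l2 : Real.log (Omega lam (2 ^ ((j + q) + 1))) ≤ Real.log (Omega lam (q * 2 ^ (j + 1))) :=
      Real.log_le_log hΩ2 (hΩanti _ _ hqm2 hmono)
    simp only [Real.log_inv] at l1 ⊢
    linarith
  · -- BrunoConditionOne → BrunoCondition
    intro h
    show Summable fun k : ℕ => ((2 : ℝ) ^ k)⁻¹ * Real.log (Omega lam (2 ^ (k + 1)))⁻¹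
    refine aux_summable _ (fun j => Real.log (omegaOne θ (2 ^ (j + 1)))⁻¹) (-Real.log 2)
      (max (Real.log c₀⁻¹) (Real.log (q:ℝ)) + Real.log 2) (q * D + 2) hlog_f_low ?_ h
    intro k
    have h2k := h2pow k
    set M : ℕ := q * (2 ^ (k + 1) + 1) * D + 1 with hM
    have hM2 : 2 ≤ M := by
      have h1 : 1 ≤ q * (2 ^ (k + 1) + 1) * D := by
        calc 1 = 1 * 1 * 1 := by ring
          _ ≤ q * (2 ^ (k + 1) + 1) * D := Nat.mul_le_mul (Nat.mul_le_mul hq0 (by omega)) hD1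
      omega
    have hMM : M ≤ 2 ^ ((k + (q * D + 2)) + 1) := by
      set P := q * D with hP
      have hP1 : 1 ≤ P := Nat.mul_le_mul hq0 hD1
      have h2P : P + 1 ≤ 2 ^ P := Nat.lt_two_pow_self (n := P)
      have ht : (2:ℕ) ^ ((k + (P + 2)) + 1) = 2 ^ (k + 1) * (2 ^ P * 4) := by
        rw [show (k + (P + 2)) + 1 = (k + 1) + (P + 2) by omega,
          pow_add (2:ℕ) (k + 1) (P + 2), pow_add (2:ℕ) P 2]
        norm_num
      have hM' : M = P * (2 ^ (k + 1) + 1) + 1 := by rw [hM, hP]; ring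
      rw [hM', ht]
      set t := 2 ^ (k + 1) with htdef
      have ht2 : 2 ≤ t := h2k
      nlinarith [hP1, h2P, ht2]
    have hω1 := hωpos M hM2
    have hω2 := hωpos _ (h2pow (k + (q * D + 2)))
    have hΩ1 := hΩpos _ h2k
    have key := hΩlow (2 ^ (k + 1)) h2k
    have hmin : 0 < min c₀ ((q:ℝ)⁻¹ * omegaOne θ M) :=
      lt_min hc₀pos (mul_pos (by positivity) hω1)
    have l0 : Real.log (min c₀ ((q:ℝ)⁻¹ * omegaOne θ M))
        ≤ Real.log (Omega lam (2 ^ (k + 1))) := Real.log_le_log hmin key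
    have lωmono : Real.log (omegaOne θ (2 ^ ((k + (q * D + 2)) + 1)))
        ≤ Real.log (omegaOne θ M) := Real.log_le_log hω2 (hωanti M _ hM2 hMM)
    have lω2 : Real.log (omegaOne θ (2 ^ ((k + (q * D + 2)) + 1))) ≤ Real.log 2 :=
      Real.log_le_log hω2 (hωle2 _ (h2pow (k + (q * D + 2))))
    have hlog2 : (0:ℝ) ≤ Real.log 2 := Real.log_nonneg (by norm_num)
    simp only [Real.log_inv] at *
    rcases min_cases c₀ ((q:ℝ)⁻¹ * omegaOne θ M) with ⟨he, _⟩ | ⟨he, _⟩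
    · rw [he] at l0
      have hmax : -Real.log c₀ ≤ max (-Real.log c₀) (Real.log (q:ℝ)) := le_max_left _ _
      linarith
    · rw [he] at l0
      rw [Real.log_mul (by positivity) (ne_of_gt hω1), Real.log_inv] at l0
      have hmax : Real.log (q:ℝ) ≤ max (-Real.log c₀) (Real.log (q:ℝ)) := le_max_right _ _
      linarith
end

section
/- Let E be a finite-dimensional complex normed space, let q ≥ 1 be an integer, let f : E → E be analytic at 0 with f 0 = 0, and suppose A := fderiv ℂ f 0 is an invertible continuous linear map. Then f is holomorphically linearizable (there exists h analytic at 0 with h 0 = 0, fderiv ℂ h 0 = id, and h ∘ f = A ∘ h near 0) if and only if the q-th iterate f^[q] is holomorphically linearizable (there exists k analytic at 0 with k 0 = 0, fderiv ℂ k 0 = id, and k ∘ f^[q] = A^q ∘ k near 0). -/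
open Filter Topology

/-- `f` is holomorphically linearizable if and only if its `q`-th iterate `f^[q]` is
holomorphically linearizable. -/
theorem linearizable_iff_iterate_linearizable
    {E : Type*} [NormedAddCommGroup E] [NormedSpace ℂ E] [FiniteDimensional ℂ E]
    (q : ℕ) (hq : 1 ≤ q)
    (f : E → E) (hf : AnalyticAt ℂ f 0) (hf0 : f 0 = 0)
    (A : E →L[ℂ] E) (hA : A = fderiv ℂ f 0) (hAinv : IsUnit A) :
    (∃ h : E → E, AnalyticAt ℂ h 0 ∧ h 0 = 0 ∧
        fderiv ℂ h 0 = ContinuousLinearMap.id ℂ E ∧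
        h ∘ f =ᶠ[𝓝 0] (A : E → E) ∘ h) ↔
      (∃ k : E → E, AnalyticAt ℂ k 0 ∧ k 0 = 0 ∧
        fderiv ℂ k 0 = ContinuousLinearMap.id ℂ E ∧
        k ∘ f^[q] =ᶠ[𝓝 0] ((A ^ q : E →L[ℂ] E) : E → E) ∘ k) := by
  have hiter0 : ∀ i : ℕ, f^[i] 0 = 0 := fun i => Function.iterate_fixed hf0 i
  have hcont : Tendsto f (𝓝 0) (𝓝 0) := by
    simpa [hf0] using hf.continuousAt.tendsto
  constructor
  · rintro ⟨h, hh, hh0, hhd, hheq⟩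
    refine ⟨h, hh, hh0, hhd, ?_⟩
    have key : ∀ n : ℕ, h ∘ f^[n] =ᶠ[𝓝 0] ((A ^ n : E →L[ℂ] E) : E → E) ∘ h := by
      intro n
      induction n with
      | zero =>
        refine Filter.EventuallyEq.of_eq ?_
        funext x; simp
      | succ n ih =>
        have h1 : ∀ᶠ x in 𝓝 0, h (f^[n] (f x)) = (A ^ n) (h (f x)) :=
          hcont.eventually ih
        filter_upwards [h1, hheq] with x hx1 hx2
        simp only [Function.comp_apply, Function.iterate_succ_apply] at *
        rw [hx1, hx2, pow_succ, ContinuousLinearMap.mul_apply]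
    exact key q
  · rintro ⟨k, hk, hk0, hkd, hkeq⟩
    obtain ⟨u, hu⟩ := hAinv
    set B : ℕ → (E →L[ℂ] E) := fun i => ((u⁻¹ ^ i : (E →L[ℂ] E)ˣ) : E →L[ℂ] E) with hB
    set g : ℕ → E → E := fun i x => B i (k (f^[i] x)) with hg
    have hApowu : ∀ i : ℕ, (A ^ i : E →L[ℂ] E) = ((u ^ i : (E →L[ℂ] E)ˣ) : E →L[ℂ] E) := by
      intro i; rw [← hu, Units.val_pow_eq_pow_val]
    have hBA : ∀ i : ℕ, (B i).comp (A ^ i) = 1 := by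
      intro i
      rw [hApowu i, hB, ← ContinuousLinearMap.mul_def, ← Units.val_mul]
      have : (u⁻¹ ^ i) * (u ^ i) = 1 := by rw [inv_pow]; exact inv_mul_cancel _
      rw [this, Units.val_one]
    have hAB : ∀ i : ℕ, A.comp (B (i + 1)) = B i := by
      intro i
      rw [← hu, hB, ← ContinuousLinearMap.mul_def, ← Units.val_mul]
      congr 1
      rw [pow_succ', ← mul_assoc, mul_inv_cancel, one_mul]
    -- analyticity of iterates
    have hiterA : ∀ i : ℕ, AnalyticAt ℂ (f^[i]) 0 := by
      intro i
      induction i with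
      | zero => simpa using (analyticAt_id : AnalyticAt ℂ (id : E → E) 0)
      | succ i ih =>
        rw [Function.iterate_succ']
        have h1 : AnalyticAt ℂ f (f^[i] 0) := by rw [hiter0]; exact hf
        exact h1.comp ih
    have hgA : ∀ i : ℕ, AnalyticAt ℂ (g i) 0 := by
      intro i
      have h1 : AnalyticAt ℂ k (f^[i] 0) := by rw [hiter0]; exact hk
      have h2 : AnalyticAt ℂ (⇑(B i)) (k (f^[i] 0)) := (B i).analyticAt _
      exact (h2.comp h1).comp (hiterA i)
    -- derivatives of iterates
    have hfd : HasFDerivAt f A 0 := hA ▸ hf.differentiableAt.hasFDerivAt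
    have hApow : ∀ i : ℕ, HasFDerivAt (f^[i]) (A ^ i) 0 := by
      intro i
      induction i with
      | zero => simpa [ContinuousLinearMap.one_def] using (hasFDerivAt_id (0 : E))
      | succ i ih =>
        have h1 : HasFDerivAt f A (f^[i] 0) := by rw [hiter0]; exact hfd
        have h2 := h1.comp 0 ih
        rw [Function.iterate_succ', pow_succ', ContinuousLinearMap.mul_def]
        exact h2
    have hkfd : HasFDerivAt k (ContinuousLinearMap.id ℂ E) 0 :=
      hkd ▸ hk.differentiableAt.hasFDerivAt
    have hgd : ∀ i : ℕ, HasFDerivAt (g i) (1 : E →L[ℂ] E) 0 := by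
      intro i
      have h1 : HasFDerivAt k (ContinuousLinearMap.id ℂ E) (f^[i] 0) := by
        rw [hiter0]; exact hkfd
      have h2 := h1.comp 0 (hApow i)
      have h3 := ((B i).hasFDerivAt).comp 0 h2
      have h4 : (B i).comp ((ContinuousLinearMap.id ℂ E).comp (A ^ i)) = 1 := by
        rw [ContinuousLinearMap.id_comp]; exact hBA i
      rw [h4] at h3
      exact h3
    -- the linearizing map
    set h : E → E := fun x => (q : ℂ)⁻¹ • ∑ i ∈ Finset.range q, g i x with hdef
    have hqC : (q : ℂ) ≠ 0 := by
      exact Nat.cast_ne_zero.mpr (by omega)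
    refine ⟨h, ?_, ?_, ?_, ?_⟩
    · exact analyticAt_const.smul (Finset.analyticAt_fun_sum _ (fun i _ => hgA i))
    · simp [hdef, hg, hiter0, hk0]
    · have hs : HasFDerivAt (fun x => ∑ i ∈ Finset.range q, g i x)
          (∑ i ∈ Finset.range q, (1 : E →L[ℂ] E)) 0 :=
        HasFDerivAt.fun_sum (fun i _ => hgd i)
      have hs2 := hs.const_smul ((q : ℂ)⁻¹)
      have : ((q : ℂ)⁻¹ • ∑ i ∈ Finset.range q, (1 : E →L[ℂ] E)) =
          ContinuousLinearMap.id ℂ E := by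
        rw [Finset.sum_const, Finset.card_range, ← Nat.cast_smul_eq_nsmul ℂ, smul_smul, inv_mul_cancel₀ hqC, one_smul,
          ContinuousLinearMap.one_def]
      rw [this] at hs2
      exact hs2.fderiv
    · filter_upwards [hkeq] with x hx
      have hx' : k (f^[q] x) = (A ^ q) (k x) := hx
      have hq0 : g q x = g 0 x := by
        have h1 : g q x = ((B q).comp (A ^ q)) (k x) := by
          simp only [hg, hx', ContinuousLinearMap.comp_apply]
        have h2 : g 0 x = k x := by simp [hg, hB]
        rw [h1, hBA q, h2, ContinuousLinearMap.one_apply]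
      have hshift : ∑ i ∈ Finset.range q, g (i + 1) x = ∑ i ∈ Finset.range q, g i x := by
        have h1 := Finset.sum_range_succ' (fun i => g i x) q
        have h2 := Finset.sum_range_succ (fun i => g i x) q
        have h3 := h1.symm.trans h2
        rw [hq0] at h3
        have h4 : g 0 x + ∑ i ∈ Finset.range q, g (i + 1) x
            = g 0 x + ∑ i ∈ Finset.range q, g i x := by
          rw [add_comm (g 0 x), add_comm (g 0 x)]
          simpa using h3
        exact add_left_cancel h4
      have hterm : ∀ i : ℕ, g i (f x) = A (g (i + 1) x) := by
        intro i
        have h1 : g i (f x) = B i (k (f^[i + 1] x)) := by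
          simp only [hg, Function.iterate_succ_apply]
        have h2 : A (g (i + 1) x) = (A.comp (B (i + 1))) (k (f^[i + 1] x)) := by
          simp only [hg, ContinuousLinearMap.comp_apply]
        rw [h1, h2, hAB i]
      show h (f x) = A (h x)
      calc h (f x) = (q : ℂ)⁻¹ • ∑ i ∈ Finset.range q, g i (f x) := rfl
        _ = (q : ℂ)⁻¹ • ∑ i ∈ Finset.range q, A (g (i + 1) x) := by
            simp only [hterm]
        _ = (q : ℂ)⁻¹ • A (∑ i ∈ Finset.range q, g (i + 1) x) := by rw [map_sum]
        _ = (q : ℂ)⁻¹ • A (∑ i ∈ Finset.range q, g i x) := by rw [hshift]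
        _ = A ((q : ℂ)⁻¹ • ∑ i ∈ Finset.range q, g i x) := by rw [map_smul]
        _ = A (h x) := rfl
end

section
/- Let E be a finite-dimensional complex normed space, let f : E → E be analytic at 0 with f 0 = 0, let A := fderiv ℂ f 0, and suppose A^q = id for some integer q ≥ 1 (equivalently, A is diagonalizable with all eigenvalues roots of unity of order dividing q). Then f is holomorphically linearizable (there exists h analytic at 0 with h 0 = 0, fderiv ℂ h 0 = id, and h ∘ f = A ∘ h near 0) if and only if the q-th iterate f^[q] coincides with the identity map on a neighborhood of 0. -/
/-!
If `h` linearizes `f`, then `h ∘ f^[q] = A^q ∘ h = h` near `0`, and `h` is injective near `0`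
by the inverse function theorem, so `f^[q] = id` near `0`.
Conversely, if `f^[q] = id`, the average `h = q⁻¹ ∑_{j<q} A^{-j} ∘ f^[j]` (with `A^{-1} = A^{q-1}`)
has derivative `id` at `0`, and `A⁻¹ ∘ h ∘ f = h` because composing with `f` shifts the
average by one step, the step `j = q` coinciding with `j = 0`.
-/

open Filter Topology Finset

theorem AnalyticAt.iterate {𝕜 E : Type*} [NontriviallyNormedField 𝕜] [NormedAddCommGroup E]
    [NormedSpace 𝕜 E] {f : E → E} {x : E} (hf : AnalyticAt 𝕜 f x) (hx : f x = x) (n : ℕ) :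
    AnalyticAt 𝕜 f^[n] x := by
  induction n with
  | zero => exact analyticAt_id
  | succ n ih => exact ih.comp_of_eq hf hx

theorem Filter.EventuallyEq.comp_iterate {α β : Type*} {l : Filter α} {f : α → α} {g : β → β}
    {h : α → β} (hf : Tendsto f l l) (hconj : h ∘ f =ᶠ[l] g ∘ h) (n : ℕ) :
    h ∘ f^[n] =ᶠ[l] g^[n] ∘ h := by
  induction n with
  | zero => rfl
  | succ n ih =>
    calc h ∘ f^[n + 1] = (h ∘ f^[n]) ∘ f := rfl
      _ =ᶠ[l] g^[n] ∘ (h ∘ f) := ih.comp_tendsto hf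
      _ =ᶠ[l] g^[n] ∘ (g ∘ h) := hconj.fun_comp _
      _ = g^[n + 1] ∘ h := rfl

section InverseFunction

variable {𝕜 E F : Type*} [NontriviallyNormedField 𝕜] [NormedAddCommGroup E] [NormedSpace 𝕜 E]
  [CompleteSpace E] [NormedAddCommGroup F] [NormedSpace 𝕜 F]

theorem HasStrictFDerivAt.eventuallyEq_id_of_comp_eventuallyEq {h : E → F} {h' : E ≃L[𝕜] F}
    {a : E} {g : E → E} (hh : HasStrictFDerivAt h (h' : E →L[𝕜] F) a)
    (hg : Tendsto g (𝓝 a) (𝓝 a)) (hhg : h ∘ g =ᶠ[𝓝 a] h) : g =ᶠ[𝓝 a] id := by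
  filter_upwards [hg.eventually hh.eventually_left_inverse, hh.eventually_left_inverse, hhg]
    with x hgx hx hhgx
  calc g x = hh.localInverse h h' a (h (g x)) := hgx.symm
    _ = hh.localInverse h h' a (h x) := congrArg _ hhgx
    _ = x := hx

theorem iterate_eventuallyEq_id_of_semiconj {f : E → E} {g : F → F} {h : E → F}
    {h' : E ≃L[𝕜] F} {a : E} {q : ℕ} (hf : Tendsto f (𝓝 a) (𝓝 a))
    (hh : HasStrictFDerivAt h (h' : E →L[𝕜] F) a) (hconj : h ∘ f =ᶠ[𝓝 a] g ∘ h)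
    (hgq : g^[q] = id) : f^[q] =ᶠ[𝓝 a] id :=
  hh.eventuallyEq_id_of_comp_eventuallyEq (hf.iterate q) <| by
    simpa [hgq] using hconj.comp_iterate hf q

end InverseFunction

section TwistedBirkhoffSum

variable {R M : Type*} [Semiring R] [TopologicalSpace M] [AddCommGroup M] [Module R M]

def twistedBirkhoffSum (B : M →L[R] M) (f : M → M) (n : ℕ) (x : M) : M :=
  ∑ j ∈ range n, (B ^ j) (f^[j] x)

theorem map_twistedBirkhoffSum_of_isPeriodicPt {B : M →L[R] M} {f : M → M} {n : ℕ} {x : M}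
    (hB : B ^ n = 1) (hx : Function.IsPeriodicPt f n x) :
    B (twistedBirkhoffSum B f n (f x)) = twistedBirkhoffSum B f n x := by
  set u : ℕ → M := fun j ↦ (B ^ j) (f^[j] x)
  have hshift : B (twistedBirkhoffSum B f n (f x)) = ∑ j ∈ range n, u (j + 1) := by
    simp only [twistedBirkhoffSum, map_sum, u, pow_succ', mul_apply_eq_comp,
      Function.iterate_succ_apply]
  have hwrap : u n = u 0 := by
    simp only [u, hB, hx.eq, pow_zero, Function.iterate_zero_apply, one_apply_eq_self]
  have hsum := (sum_range_succ' u n).symm.trans (sum_range_succ u n)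
  rw [hwrap] at hsum
  rw [hshift, add_right_cancel hsum]
  rfl

end TwistedBirkhoffSum

section Linearization

variable {𝕜 E : Type*} [NontriviallyNormedField 𝕜] [NormedAddCommGroup E] [NormedSpace 𝕜 E]

theorem AnalyticAt.twistedBirkhoffSum {f : E → E} {x : E} (hf : AnalyticAt 𝕜 f x)
    (hx : f x = x) (B : E →L[𝕜] E) (n : ℕ) : AnalyticAt 𝕜 (twistedBirkhoffSum B f n) x :=
  Finset.analyticAt_fun_sum _ fun j _ ↦ (B ^ j).analyticAt _ |>.comp (hf.iterate hx j)

theorem HasFDerivAt.twistedBirkhoffSum {f : E → E} {A : E →L[𝕜] E} {x : E}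
    (hf : HasFDerivAt f A x) (hx : f x = x) (B : E →L[𝕜] E) (n : ℕ) :
    HasFDerivAt (twistedBirkhoffSum B f n) (∑ j ∈ range n, B ^ j * A ^ j) x :=
  HasFDerivAt.fun_sum fun j _ ↦ (B ^ j).hasFDerivAt.comp x (hf.iterate hx j)

theorem exists_linearization_of_iterate_eventuallyEq_id [CharZero 𝕜] {f : E → E}
    {A : E →L[𝕜] E} {q : ℕ} (hq : q ≠ 0) (hf : AnalyticAt 𝕜 f 0) (hf0 : f 0 = 0)
    (hA : HasFDerivAt f A 0) (hAq : A ^ q = 1) (hfq : f^[q] =ᶠ[𝓝 0] id) :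
    ∃ h : E → E, AnalyticAt 𝕜 h 0 ∧ h 0 = 0 ∧ fderiv 𝕜 h 0 = ContinuousLinearMap.id 𝕜 E ∧
      h ∘ f =ᶠ[𝓝 0] A ∘ h := by
  set B := A ^ (q - 1)
  have hBA : B * A = 1 := by
    rw [← pow_succ, Nat.sub_add_cancel (Nat.one_le_iff_ne_zero.2 hq), hAq]
  have hcomm : Commute B A := (Commute.self_pow A (q - 1)).symm
  have hAB : A * B = 1 := hcomm.eq.symm.trans hBA
  have hBq : B ^ q = 1 := by rw [← pow_mul, mul_comm, pow_mul, hAq, one_pow]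
  have hderiv : ∑ j ∈ range q, B ^ j * A ^ j = (q : 𝕜) • 1 := by
    simp only [← hcomm.mul_pow, hBA, one_pow, sum_const, card_range, Nat.cast_smul_eq_nsmul]
  refine ⟨(q : 𝕜)⁻¹ • twistedBirkhoffSum B f q, (hf.twistedBirkhoffSum hf0 B q).const_smul,
    by simp [twistedBirkhoffSum, Function.iterate_fixed hf0], ?_, ?_⟩
  · rw [((hA.twistedBirkhoffSum hf0 B q).const_smul _).fderiv, hderiv, smul_smul,
      inv_mul_cancel₀ (Nat.cast_ne_zero.2 hq), one_smul, ContinuousLinearMap.one_def]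
  · filter_upwards [hfq] with x hx
    simp only [Function.comp_apply, Pi.smul_apply, map_smul]
    rw [← map_twistedBirkhoffSum_of_isPeriodicPt hBq hx, ← mul_apply_eq_comp, hAB,
      one_apply_eq_self]

end Linearization

/-- If the linear part `A` of `f` satisfies `A^q = id`, then `f` is holomorphically
linearizable if and only if `f^[q]` is the identity near `0`. -/
theorem linearizable_iff_iterate_eq_id
    {E : Type*} [NormedAddCommGroup E] [NormedSpace ℂ E] [FiniteDimensional ℂ E]
    (q : ℕ) (hq : 1 ≤ q)
    (f : E → E) (hf : AnalyticAt ℂ f 0) (hf0 : f 0 = 0)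
    (A : E →L[ℂ] E) (hA : A = fderiv ℂ f 0)
    (hAq : A ^ q = ContinuousLinearMap.id ℂ E) :
    (∃ h : E → E, AnalyticAt ℂ h 0 ∧ h 0 = 0 ∧
        fderiv ℂ h 0 = ContinuousLinearMap.id ℂ E ∧
        h ∘ f =ᶠ[𝓝 0] (A : E → E) ∘ h) ↔
      f^[q] =ᶠ[𝓝 0] id := by
  rw [← ContinuousLinearMap.one_def] at hAq
  constructor
  · rintro ⟨h, hh, -, hdh, hconj⟩
    have hstrict : HasStrictFDerivAt h
        ((ContinuousLinearEquiv.refl ℂ E : E ≃L[ℂ] E) : E →L[ℂ] E) 0 := by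
      simpa [hdh] using hh.hasStrictFDerivAt
    refine iterate_eventuallyEq_id_of_semiconj ?_ hstrict hconj ?_
    · simpa [hf0] using hf.continuousAt.tendsto
    · rw [← FunLike.coe_pow_eq_iterate, hAq, FunLike.coe_one_eq_id]
  · exact exists_linearization_of_iterate_eventuallyEq_id (by omega) hf hf0
      (hA ▸ hf.differentiableAt.hasFDerivAt) hAq
end

section
/- Let E be a complex normed space, A : E →L[ℂ] E a continuous linear map, v ∈ E a nonzero vector with A v = v, and ℓ : E →L[ℂ] ℂ a nonzero continuous linear functional with ℓ ∘ A = ℓ (such v and ℓ exist whenever the matrix of A contains a non-trivial Jordan block with eigenvalue 1). Then for every integer n ≥ 2, the polynomial map hₙ : E → E defined by hₙ(z) = z + (ℓ z)^n • v satisfies hₙ(0) = 0, fderiv ℂ hₙ 0 = id, and hₙ ∘ A = A ∘ hₙ as maps on E; moreover, if ℓ(v) = 0 is not assumed, the maps gₙ(z) = (ℓ z)^n • v for n = 2, …, m are linearly independent in the space of maps E → E for every m ≥ 2. Consequently the centralizer of A in the group of formal germs tangent to the identity is infinite-dimensional (δ(A) = +∞). -/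
/-- If `A` has a fixed vector `v ≠ 0` and a fixed linear functional `ℓ ≠ 0` (as produced by a
non-trivial Jordan block with eigenvalue `1`), then for every `n ≥ 2` the map
`hₙ(z) = z + (ℓ z)^n • v` is tangent to the identity, fixes `0`, and commutes with `A`;
moreover the maps `gₙ(z) = (ℓ z)^n • v`, `2 ≤ n ≤ m`, are linearly independent for every
`m ≥ 2`.  Hence the centralizer of `A` is infinite-dimensional. -/
theorem centralizer_infinite_dimensional_of_fixed_vector_and_functional
    {E : Type*} [NormedAddCommGroup E] [NormedSpace ℂ E]
    (A : E →L[ℂ] E) (v : E) (hv : v ≠ 0) (hAv : A v = v)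
    (l : E →L[ℂ] ℂ) (hl : l ≠ 0) (hlA : l.comp A = l) :
    (∀ n : ℕ, 2 ≤ n →
      (fun z : E => z + (l z) ^ n • v) 0 = 0 ∧
      fderiv ℂ (fun z : E => z + (l z) ^ n • v) 0 = ContinuousLinearMap.id ℂ E ∧
      (fun z : E => z + (l z) ^ n • v) ∘ A = (A : E → E) ∘ fun z : E => z + (l z) ^ n • v) ∧
    (∀ m : ℕ, 2 ≤ m →
      LinearIndependent ℂ fun k : Set.Icc 2 m => fun z : E => (l z) ^ (k : ℕ) • v) := by
  constructor
  · intro n hn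
    refine ⟨by simp [zero_pow (show n ≠ 0 by omega)], ?_, ?_⟩
    · have hd : HasDerivAt (fun w : ℂ => w ^ n) ((n : ℂ) * (0 : ℂ) ^ (n - 1)) (l 0) := by
        rw [map_zero]; exact hasDerivAt_pow n 0
      have h1 : HasFDerivAt (fun z : E => (l z) ^ n)
          (((n : ℂ) * (0 : ℂ) ^ (n - 1)) • (l : E →L[ℂ] ℂ)) 0 :=
        HasDerivAt.comp_hasFDerivAt 0 hd l.hasFDerivAt
      have h0 : ((n : ℂ) * (0 : ℂ) ^ (n - 1)) • (l : E →L[ℂ] ℂ) = 0 := by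
        rw [zero_pow (show n - 1 ≠ 0 by omega), mul_zero]; exact zero_smul ℂ l
      rw [h0] at h1
      have h2 : HasFDerivAt (fun z : E => z + (l z) ^ n • v)
          (ContinuousLinearMap.id ℂ E + (0 : E →L[ℂ] ℂ).smulRight v) 0 :=
        (hasFDerivAt_id 0).add (h1.smul_const v)
      rw [h2.fderiv]
      ext z
      simp
    · funext z
      have hlz : l (A z) = l z := by
        have := congrArg (fun f : E →L[ℂ] ℂ => f z) hlA
        simpa using this
      simp [Function.comp, hlz, map_add, hAv]
  · intro m hm
    -- find z₀ with l z₀ ≠ 0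
    obtain ⟨z₀, hz₀⟩ : ∃ z, l z ≠ 0 := by
      by_contra h
      push_neg at h
      exact hl (by ext z; simpa using h z)
    rw [Fintype.linearIndependent_iff]
    intro g hg i
    have key : ∀ w : ℂ, ∑ k : Set.Icc 2 m, g k * w ^ (k : ℕ) = 0 := by
      intro w
      have hz : l ((w / l z₀) • z₀) = w := by
        simp [map_smul, div_mul_cancel₀ _ hz₀]
      have := congrFun hg ((w / l z₀) • z₀)
      simp only [Finset.sum_apply, Pi.smul_apply, Pi.zero_apply, hz, smul_smul] at this
      rw [← Finset.sum_smul] at this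
      rcases smul_eq_zero.mp this with h | h
      · exact h
      · exact absurd h hv
    set P : Polynomial ℂ := ∑ k : Set.Icc 2 m, Polynomial.C (g k) * Polynomial.X ^ (k : ℕ)
      with hP
    have hPeval : ∀ w : ℂ, P.eval w = 0 := by
      intro w
      rw [hP]
      simp only [Polynomial.eval_finset_sum, Polynomial.eval_mul, Polynomial.eval_C,
        Polynomial.eval_pow, Polynomial.eval_X]
      exact key w
    have hP0 : P = 0 := by
      apply Polynomial.funext
      intro x
      simp [hPeval x]
    have := congrArg (fun p => Polynomial.coeff p (i : ℕ)) hP0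
    simp only [hP, Polynomial.finset_sum_coeff, Polynomial.coeff_C_mul,
      Polynomial.coeff_X_pow, Polynomial.coeff_zero, mul_ite, mul_one, mul_zero] at this
    rwa [Finset.sum_eq_single i (fun b _ hb => by
        rw [if_neg (fun h => hb (Subtype.ext h.symm))])
      (fun h => absurd (Finset.mem_univ i) h), if_pos rfl] at this
end

section
/- Let E be a complex normed space, q ≥ 1 an integer, A : E ≃L[ℂ] E a continuous linear equivalence, and F : FormalMultilinearSeries ℂ E E a formal germ with F 0 = 0 and F 1 = A. Let F^{∘q} denote the q-fold composition F.comp F.comp … .comp F. Then there exists a formal multilinear series p with p 0 = 0, p 1 = id, and p.comp F = A ∘ p (where (A ∘ p)ₙ = A ∘ pₙ) if and only if there exists a formal multilinear series p' with p' 0 = 0, p' 1 = id, and p'.comp F^{∘q} = A^q ∘ p'. That is, a formal germ is formally linearizable if and only if its q-th iterate is formally linearizable. -/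
open FormalMultilinearSeries

/-- The `q`-fold composition `F^{∘q} = F.comp F.comp … .comp F` of a formal germ with
itself (with `F^{∘0}` the identity series). -/
noncomputable def iterateComp {E : Type*} [NormedAddCommGroup E] [NormedSpace ℂ E]
    (F : FormalMultilinearSeries ℂ E E) : ℕ → FormalMultilinearSeries ℂ E E
  | 0 => FormalMultilinearSeries.id ℂ E 0
  | k + 1 => F.comp (iterateComp F k)

section Aux
variable {E : Type*} [NormedAddCommGroup E] [NormedSpace ℂ E]


theorem fms_smul_apply (c : ℂ) (r : FormalMultilinearSeries ℂ E E) (n : ℕ) :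
    (c • r) n = c • r n := rfl

theorem fms_add_apply (r r' : FormalMultilinearSeries ℂ E E) (n : ℕ) :
    (r + r') n = r n + r' n := rfl

theorem fms_zero_apply (n : ℕ) : (0 : FormalMultilinearSeries ℂ E E) n = 0 := rfl

theorem fms_sum_apply {ι : Type*} (t : Finset ι) (g : ι → FormalMultilinearSeries ℂ E E)
    (n : ℕ) : (∑ i ∈ t, g i) n = ∑ i ∈ t, g i n := by
  induction t using Finset.cons_induction with
  | empty => simp [fms_zero_apply]
  | cons a t ha ih => rw [Finset.sum_cons, Finset.sum_cons, fms_add_apply, ih]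

theorem myMulApply (e e' : E ≃L[ℂ] E) (x : E) : (e * e') x = e (e' x) := rfl

theorem myInvEq (e : E ≃L[ℂ] E) : (e⁻¹ : E ≃L[ℂ] E) = e.symm := rfl

/-- post-composition with a linear map commutes with composition of series -/
theorem lcomp_comp (L : E →L[ℂ] E) (r s : FormalMultilinearSeries ℂ E E) :
    (L.compFormalMultilinearSeries r).comp s = L.compFormalMultilinearSeries (r.comp s) := by
  ext n v
  simp only [FormalMultilinearSeries.comp, ContinuousLinearMap.compFormalMultilinearSeries_apply,
    ContinuousMultilinearMap.sum_apply, FormalMultilinearSeries.compAlongComposition_apply,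
    ContinuousLinearMap.compContinuousMultilinearMap_coe, Function.comp_apply, map_sum]

theorem lcomp_lcomp (L M : E →L[ℂ] E) (r : FormalMultilinearSeries ℂ E E) :
    L.compFormalMultilinearSeries (M.compFormalMultilinearSeries r)
      = (L.comp M).compFormalMultilinearSeries r := by
  ext n v
  simp [ContinuousLinearMap.compFormalMultilinearSeries_apply']

theorem lcomp_id (r : FormalMultilinearSeries ℂ E E) :
    (ContinuousLinearMap.id ℂ E).compFormalMultilinearSeries r = r := by
  ext n v
  simp [ContinuousLinearMap.compFormalMultilinearSeries_apply']

theorem sum_comp {ι : Type*} (t : Finset ι) (g : ι → FormalMultilinearSeries ℂ E E)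
    (s : FormalMultilinearSeries ℂ E E) :
    (∑ i ∈ t, g i).comp s = ∑ i ∈ t, (g i).comp s := by
  ext n v
  simp only [FormalMultilinearSeries.comp, fms_sum_apply,
    ContinuousMultilinearMap.sum_apply, FormalMultilinearSeries.compAlongComposition_apply]
  rw [Finset.sum_comm]

theorem smul_comp (c : ℂ) (r s : FormalMultilinearSeries ℂ E E) :
    (c • r).comp s = c • (r.comp s) := by
  ext n v
  simp only [FormalMultilinearSeries.comp, Finset.smul_sum, fms_smul_apply,
    ContinuousMultilinearMap.sum_apply, ContinuousMultilinearMap.smul_apply,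
    FormalMultilinearSeries.compAlongComposition_apply]

theorem lcomp_sum {ι : Type*} (L : E →L[ℂ] E) (t : Finset ι)
    (g : ι → FormalMultilinearSeries ℂ E E) :
    L.compFormalMultilinearSeries (∑ i ∈ t, g i)
      = ∑ i ∈ t, L.compFormalMultilinearSeries (g i) := by
  ext n v
  simp [ContinuousLinearMap.compFormalMultilinearSeries_apply', fms_sum_apply]

theorem lcomp_smul (L : E →L[ℂ] E) (c : ℂ) (r : FormalMultilinearSeries ℂ E E) :
    L.compFormalMultilinearSeries (c • r) = c • L.compFormalMultilinearSeries r := by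
  ext n v
  simp [ContinuousLinearMap.compFormalMultilinearSeries_apply', fms_smul_apply]

variable (F : FormalMultilinearSeries ℂ E E) (hF0 : F 0 = 0)

include hF0 in
theorem iterateComp_zero_coeff (k : ℕ) : (iterateComp F k) 0 = 0 := by
  induction k with
  | zero => ext v; simp [iterateComp]
  | succ k ih =>
    show (F.comp (iterateComp F k)) 0 = 0
    rw [FormalMultilinearSeries.comp_coeff_zero'', hF0]

include hF0 in
theorem iterateComp_succ' (k : ℕ) :
    iterateComp F (k + 1) = (iterateComp F k).comp F := by
  induction k with
  | zero =>
    show F.comp (FormalMultilinearSeries.id ℂ E 0) = (FormalMultilinearSeries.id ℂ E 0).comp F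
    rw [FormalMultilinearSeries.comp_id, FormalMultilinearSeries.id_comp' F 0 (fun i => i.elim0)]
    rw [hF0]; rfl
  | succ k ih =>
    show F.comp (iterateComp F (k + 1)) = (F.comp (iterateComp F k)).comp F
    rw [FormalMultilinearSeries.comp_assoc, ← ih]

variable (A : E ≃L[ℂ] E)
  (hF1 : F 1 = (continuousMultilinearCurryFin1 ℂ E E).symm (A : E →L[ℂ] E))

include hF1 in
theorem iterateComp_one_coeff (k : ℕ) (v : Fin 1 → E) :
    (iterateComp F k) 1 v = (A ^ k) (v 0) := by
  induction k with
  | zero =>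
    rw [pow_zero]
    show (FormalMultilinearSeries.id ℂ E 0) 1 v = (1 : E ≃L[ℂ] E) (v 0)
    rw [FormalMultilinearSeries.id_apply_one]; rfl
  | succ k ih =>
    show (F.comp (iterateComp F k)) 1 v = _
    rw [FormalMultilinearSeries.comp_coeff_one, hF1]
    simp [ih, pow_succ', myMulApply]

end Aux

/-- A formal germ `F` with invertible linear part `A` is formally linearizable if and only
if its `q`-th iterate `F^{∘q}` is formally linearizable. -/
theorem formally_linearizable_iff_iterate_formally_linearizable
    {E : Type*} [NormedAddCommGroup E] [NormedSpace ℂ E]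
    (q : ℕ) (hq : 1 ≤ q) (A : E ≃L[ℂ] E)
    (F : FormalMultilinearSeries ℂ E E) (hF0 : F 0 = 0)
    (hF1 : F 1 = (continuousMultilinearCurryFin1 ℂ E E).symm (A : E →L[ℂ] E)) :
    (∃ p : FormalMultilinearSeries ℂ E E, p 0 = 0 ∧
        p 1 = (continuousMultilinearCurryFin1 ℂ E E).symm (ContinuousLinearMap.id ℂ E) ∧
        p.comp F = fun n => (A : E →L[ℂ] E).compContinuousMultilinearMap (p n)) ↔
      (∃ p' : FormalMultilinearSeries ℂ E E, p' 0 = 0 ∧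
        p' 1 = (continuousMultilinearCurryFin1 ℂ E E).symm (ContinuousLinearMap.id ℂ E) ∧
        p'.comp (iterateComp F q) =
          fun n => ((A ^ q : E ≃L[ℂ] E) : E →L[ℂ] E).compContinuousMultilinearMap (p' n)) := by
  constructor
  · rintro ⟨p, hp0, hp1, hpF⟩
    refine ⟨p, hp0, hp1, ?_⟩
    have hpF' : p.comp F = (A : E →L[ℂ] E).compFormalMultilinearSeries p := hpF
    have key : ∀ k, p.comp (iterateComp F k)
        = ((A ^ k : E ≃L[ℂ] E) : E →L[ℂ] E).compFormalMultilinearSeries p := by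
      intro k
      induction k with
      | zero =>
        show p.comp (FormalMultilinearSeries.id ℂ E 0) = _
        rw [FormalMultilinearSeries.comp_id]
        ext n v
        simp only [ContinuousLinearMap.compFormalMultilinearSeries_apply', pow_zero]
        rfl
      | succ k ih =>
        rw [iterateComp_succ' F hF0, ← FormalMultilinearSeries.comp_assoc, ih,
          lcomp_comp, hpF', lcomp_lcomp]
        ext n v
        simp [ContinuousLinearMap.compFormalMultilinearSeries_apply', pow_succ, myMulApply]
    exact key q
  · rintro ⟨p', hp0, hp1, hpq⟩
    obtain ⟨m, rfl⟩ : ∃ m, q = m + 1 := ⟨q - 1, (Nat.succ_pred_eq_of_pos hq).symm⟩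
    have hpq' : p'.comp (iterateComp F (m + 1))
        = ((A ^ (m + 1) : E ≃L[ℂ] E) : E →L[ℂ] E).compFormalMultilinearSeries p' := hpq
    set g : ℕ → FormalMultilinearSeries ℂ E E := fun i =>
      (((A ^ i)⁻¹ : E ≃L[ℂ] E) : E →L[ℂ] E).compFormalMultilinearSeries
        (p'.comp (iterateComp F i)) with hg
    set S : ℕ → FormalMultilinearSeries ℂ E E := fun i =>
      ((A : E →L[ℂ] E).comp (((A ^ i)⁻¹ : E ≃L[ℂ] E) : E →L[ℂ] E)).compFormalMultilinearSeries
        (p'.comp (iterateComp F i)) with hS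
    have hgi : ∀ i, g i = (((A ^ i)⁻¹ : E ≃L[ℂ] E) : E →L[ℂ] E).compFormalMultilinearSeries
        (p'.comp (iterateComp F i)) := fun i => rfl
    have hSi : ∀ i, S i = ((A : E →L[ℂ] E).comp
          (((A ^ i)⁻¹ : E ≃L[ℂ] E) : E →L[ℂ] E)).compFormalMultilinearSeries
        (p'.comp (iterateComp F i)) := fun i => rfl
    have hgcomp : ∀ i, (g i).comp F
        = (((A ^ i)⁻¹ : E ≃L[ℂ] E) : E →L[ℂ] E).compFormalMultilinearSeries
            (p'.comp (iterateComp F (i + 1))) := by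
      intro i
      rw [hgi, lcomp_comp, FormalMultilinearSeries.comp_assoc, ← iterateComp_succ' F hF0]
    have key1 : ∀ i : ℕ, (A : E →L[ℂ] E).comp (((A ^ (i + 1))⁻¹ : E ≃L[ℂ] E) : E →L[ℂ] E)
        = (((A ^ i)⁻¹ : E ≃L[ℂ] E) : E →L[ℂ] E) := by
      intro i
      ext x
      show A ((A ^ (i + 1))⁻¹ x) = (A ^ i)⁻¹ x
      rw [pow_succ, mul_inv_rev, myMulApply, myInvEq A, ContinuousLinearEquiv.apply_symm_apply]
    have key2 : (((A ^ m)⁻¹ : E ≃L[ℂ] E) : E →L[ℂ] E).comp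
          ((A ^ (m + 1) : E ≃L[ℂ] E) : E →L[ℂ] E)
        = (A : E →L[ℂ] E).comp (((A ^ 0)⁻¹ : E ≃L[ℂ] E) : E →L[ℂ] E) := by
      ext x
      show (A ^ m)⁻¹ ((A ^ (m + 1)) x) = A ((A ^ 0)⁻¹ x)
      rw [pow_succ, pow_zero, inv_one, myMulApply, myInvEq (A ^ m),
        ContinuousLinearEquiv.symm_apply_apply]
      rfl
    have hTS : ∀ i, (g i).comp F = S (i + 1) := by
      intro i
      rw [hgcomp, hSi, key1 i]
    have hlast : (g m).comp F = S 0 := by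
      rw [hgcomp, hpq', lcomp_lcomp, hSi]
      have h0 : p'.comp (iterateComp F 0) = p' := FormalMultilinearSeries.comp_id p' 0
      rw [h0, key2]
    set p : FormalMultilinearSeries ℂ E E :=
      ((m + 1 : ℕ) : ℂ)⁻¹ • ∑ i ∈ Finset.range (m + 1), g i with hp
    refine ⟨p, ?_, ?_, ?_⟩
    · rw [hp, fms_smul_apply, fms_sum_apply]
      have hz : ∀ i ∈ Finset.range (m + 1), g i 0 = 0 := by
        intro i _
        rw [hgi]
        show (((A ^ i)⁻¹ : E ≃L[ℂ] E) :
          E →L[ℂ] E).compContinuousMultilinearMap ((p'.comp (iterateComp F i)) 0) = 0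
        rw [FormalMultilinearSeries.comp_coeff_zero'', hp0]
        ext v; simp
      rw [Finset.sum_congr rfl hz, Finset.sum_const, smul_zero, smul_zero]
    · ext v
      rw [hp, fms_smul_apply, fms_sum_apply, ContinuousMultilinearMap.smul_apply,
        ContinuousMultilinearMap.sum_apply]
      have h1 : ∀ i ∈ Finset.range (m + 1), (g i 1) v = v 0 := by
        intro i _
        rw [hgi]
        show ((A ^ i)⁻¹ : E ≃L[ℂ] E) ((p'.comp (iterateComp F i)) 1 v)
          = v 0
        rw [FormalMultilinearSeries.comp_coeff_one, hp1]
        simp only [continuousMultilinearCurryFin1_symm_apply, ContinuousLinearMap.id_apply]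
        rw [iterateComp_one_coeff F A hF1 i, myInvEq, ContinuousLinearEquiv.symm_apply_apply]
      rw [Finset.sum_congr rfl h1, Finset.sum_const, Finset.card_range]
      rw [continuousMultilinearCurryFin1_symm_apply, ContinuousLinearMap.id_apply]
      rw [← Nat.cast_smul_eq_nsmul ℂ, smul_smul,
        inv_mul_cancel₀ (by exact_mod_cast Nat.succ_ne_zero m), one_smul]
    · show p.comp F = (A : E →L[ℂ] E).compFormalMultilinearSeries p
      have hAg : ∀ i, (A : E →L[ℂ] E).compFormalMultilinearSeries (g i) = S i := by
        intro i
        rw [hgi, hSi, lcomp_lcomp]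
      have hsum : ∑ i ∈ Finset.range (m + 1), (g i).comp F
          = ∑ i ∈ Finset.range (m + 1),
              (A : E →L[ℂ] E).compFormalMultilinearSeries (g i) :=
        calc ∑ i ∈ Finset.range (m + 1), (g i).comp F
            = ∑ i ∈ Finset.range m, S (i + 1) + S 0 := by
              rw [Finset.sum_range_succ]
              exact congrArg₂ (· + ·)
                (Finset.sum_congr rfl fun i _ => hTS i) hlast
          _ = ∑ i ∈ Finset.range (m + 1), S i := (Finset.sum_range_succ' S m).symm
          _ = ∑ i ∈ Finset.range (m + 1),
                (A : E →L[ℂ] E).compFormalMultilinearSeries (g i) :=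
              Finset.sum_congr rfl fun i _ => (hAg i).symm
      rw [hp, smul_comp, sum_comp, lcomp_smul, lcomp_sum, hsum]
end
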